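/- arXiv:2603.15543 — 6 statements merged into one kernel-verified Lean document; each statement's English description precedes it below -/
import Mathlib

section
/- Let M be the adjacency matrix of the oriented Dutch windmill graph D^m_n with m ≥ 2 and n ≥ 3. Then the Drazin index of M equals n-1; that is, n-1 is the least nonnegative integer k such that rank(M^(k+1)) = rank(M^k). -/
/-- Edge relation of the oriented Dutch windmill graph `D^m_n`, on vertex
labels `1, …, m*(n-1)+1`. -/
def windmillEdge (m n a b : ℕ) : Prop :=
  (∃ k, 1 ≤ k ∧ k ≤ m ∧ a = 1 ∧ b = (k-1)*(n-1)+2) ∨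
  (∃ k i, 1 ≤ k ∧ k ≤ m ∧ 2 ≤ i ∧ i ≤ n-1 ∧ a = (k-1)*(n-1)+i ∧ b = a+1) ∨
  (∃ k, 1 ≤ k ∧ k ≤ m ∧ a = (k-1)*(n-1)+n ∧ b = 1)

/-- `IsWalk m n r w i j` : `w` is a walk of length `r` from `i` to `j` in `D^m_n`,
recorded as the sequence of its `r+1` vertices. -/
def IsWalk (m n r : ℕ) (w : Fin (r+1) → ℕ) (i j : ℕ) : Prop :=
  w 0 = i ∧ w (Fin.last r) = j ∧
  (∀ t : Fin (r+1), 1 ≤ w t ∧ w t ≤ m*(n-1)+1) ∧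
  (∀ t : Fin r, windmillEdge m n (w t.castSucc) (w t.succ))

/-- Number of walks of length `r` from `i` to `j` in `D^m_n`. -/
noncomputable def numWalks (m n r i j : ℕ) : ℕ :=
  Nat.card {w : Fin (r+1) → ℕ // IsWalk m n r w i j}

open Classical in
/-- Adjacency matrix of `D^m_n` (vertex `v : Fin (m*(n-1)+1)` has label `v+1`). -/
noncomputable def windmillMatrix (m n : ℕ) :
    Matrix (Fin (m*(n-1)+1)) (Fin (m*(n-1)+1)) ℝ :=
  fun i j => if windmillEdge m n ((i : ℕ)+1) ((j : ℕ)+1) then 1 else 0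

section WindmillAux

open Matrix

variable {m n : ℕ}

private lemma wm_uniq (hn : 3 ≤ n) {a b c d : ℕ} (hc : c < n-1) (hd : d < n-1)
    (h : a*(n-1)+c = b*(n-1)+d) : a = b ∧ c = d := by
  have h1 : (a*(n-1)+c) % (n-1) = c := Nat.mul_add_mod_of_lt hc
  have h2 : (b*(n-1)+d) % (n-1) = d := Nat.mul_add_mod_of_lt hd
  have hcd : c = d := by rw [← h1, h, h2]
  subst hcd
  refine ⟨?_, rfl⟩
  have h3 : a*(n-1) = b*(n-1) := by omega
  exact Nat.eq_of_mul_eq_mul_right (by omega) h3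

private lemma edge_first (hn : 3 ≤ n) {k' : ℕ} (hk' : k' < m) (a : ℕ) :
    windmillEdge m n a (k'*(n-1)+2) ↔ a = 1 := by
  constructor
  · rintro (⟨k,hk1,hk2,ha,hb⟩|⟨k,i,hk1,hk2,hi1,hi2,ha,hb⟩|⟨k,hk1,hk2,ha,hb⟩)
    · exact ha
    · exfalso
      obtain ⟨k₀, rfl⟩ : ∃ k₀, k = k₀+1 := ⟨k-1, by omega⟩
      simp only [Nat.add_sub_cancel] at ha hb
      subst ha
      have h := wm_uniq hn (show 0 < n-1 by omega) (show i-1 < n-1 by omega)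
        (show k'*(n-1)+0 = k₀*(n-1)+(i-1) by omega)
      omega
    · exfalso; omega
  · rintro rfl
    exact Or.inl ⟨k'+1, by omega, by omega, rfl, by simp⟩

private lemma edge_mid (hn : 3 ≤ n) {k' i' : ℕ} (hk' : k' < m) (hi' : i'+1 < n-1) (a : ℕ) :
    windmillEdge m n a (k'*(n-1)+(i'+1)+2) ↔ a = k'*(n-1)+i'+2 := by
  constructor
  · rintro (⟨k,hk1,hk2,ha,hb⟩|⟨k,i,hk1,hk2,hi1,hi2,ha,hb⟩|⟨k,hk1,hk2,ha,hb⟩)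
    · exfalso
      obtain ⟨k₀, rfl⟩ : ∃ k₀, k = k₀+1 := ⟨k-1, by omega⟩
      simp only [Nat.add_sub_cancel] at hb
      have h := wm_uniq hn hi' (show 0 < n-1 by omega)
        (show k'*(n-1)+(i'+1) = k₀*(n-1)+0 by omega)
      omega
    · obtain ⟨k₀, rfl⟩ : ∃ k₀, k = k₀+1 := ⟨k-1, by omega⟩
      simp only [Nat.add_sub_cancel] at ha hb
      subst ha
      have h := wm_uniq hn hi' (show i-1 < n-1 by omega)
        (show k'*(n-1)+(i'+1) = k₀*(n-1)+(i-1) by omega)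
      obtain ⟨rfl, h2⟩ := h
      omega
    · exfalso; omega
  · rintro rfl
    refine Or.inr (Or.inl ⟨k'+1, i'+2, by omega, by omega, by omega, by omega, ?_, by omega⟩)
    simp only [Nat.add_sub_cancel]; omega

private lemma edge_hub (hn : 3 ≤ n) (a : ℕ) :
    windmillEdge m n a 1 ↔ ∃ k' : ℕ, k' < m ∧ a = k'*(n-1)+(n-2)+2 := by
  constructor
  · rintro (⟨k,hk1,hk2,ha,hb⟩|⟨k,i,hk1,hk2,hi1,hi2,ha,hb⟩|⟨k,hk1,hk2,ha,hb⟩)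
    · exfalso; omega
    · exfalso; omega
    · obtain ⟨k₀, rfl⟩ : ∃ k₀, k = k₀+1 := ⟨k-1, by omega⟩
      simp only [Nat.add_sub_cancel] at ha
      exact ⟨k₀, by omega, by omega⟩
  · rintro ⟨k', hk', rfl⟩
    refine Or.inr (Or.inr ⟨k'+1, by omega, by omega, ?_, rfl⟩)
    simp only [Nat.add_sub_cancel]; omega

private lemma bv_lt (hn : 3 ≤ n) {k' i' : ℕ} (hk' : k' < m) (hi' : i' < n-1) :
    k'*(n-1)+i'+1 < m*(n-1)+1 := by
  have h1 : (k'+1)*(n-1) ≤ m*(n-1) := Nat.mul_le_mul_right _ (by omega)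
  have h2 : (k'+1)*(n-1) = k'*(n-1)+(n-1) := by ring
  omega

private lemma col_first (hn : 3 ≤ n) {k' : ℕ} (hk' : k' < m) :
    windmillMatrix m n *ᵥ
      Pi.single (⟨k'*(n-1)+0+1, bv_lt hn hk' (by omega)⟩ : Fin (m*(n-1)+1)) 1
      = Pi.single (⟨0, Nat.succ_pos _⟩ : Fin (m*(n-1)+1)) 1 := by
  ext i
  rw [Matrix.mulVec_single_one, Matrix.col_apply]
  simp only [windmillMatrix, mul_one]
  rw [show (k'*(n-1)+0+1 : ℕ)+1 = k'*(n-1)+2 by omega]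
  rw [edge_first hn hk']
  rw [Pi.single_apply]
  by_cases h : i = (⟨0, Nat.succ_pos _⟩ : Fin (m*(n-1)+1))
  · subst h; simp
  · rw [if_neg, if_neg h]
    rw [Fin.ext_iff] at h
    simp only [Fin.val_mk] at h ⊢
    omega

private lemma col_mid (hn : 3 ≤ n) {k' i' : ℕ} (hk' : k' < m) (hi' : i'+1 < n-1) :
    windmillMatrix m n *ᵥ
      Pi.single (⟨k'*(n-1)+(i'+1)+1, bv_lt hn hk' hi'⟩ : Fin (m*(n-1)+1)) 1
      = Pi.single (⟨k'*(n-1)+i'+1, bv_lt hn hk' (by omega)⟩ : Fin (m*(n-1)+1)) 1 := by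
  ext i
  rw [Matrix.mulVec_single_one, Matrix.col_apply]
  simp only [windmillMatrix, mul_one]
  rw [show (k'*(n-1)+(i'+1)+1 : ℕ)+1 = k'*(n-1)+(i'+1)+2 by omega]
  rw [edge_mid hn hk' hi']
  rw [Pi.single_apply]
  by_cases h : i = (⟨k'*(n-1)+i'+1, bv_lt hn hk' (by omega)⟩ : Fin (m*(n-1)+1))
  · subst h; simp
  · rw [if_neg, if_neg h]
    rw [Fin.ext_iff] at h
    simp only [Fin.val_mk] at h ⊢
    omega

private lemma col_hub (hn : 3 ≤ n) (hm : 2 ≤ m) :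
    windmillMatrix m n *ᵥ Pi.single (⟨0, Nat.succ_pos _⟩ : Fin (m*(n-1)+1)) 1
      = ∑ k' : Fin m, Pi.single
          (⟨(k':ℕ)*(n-1)+(n-2)+1, bv_lt hn k'.isLt (by omega)⟩ : Fin (m*(n-1)+1)) 1 := by
  ext i
  rw [Matrix.mulVec_single_one, Matrix.col_apply]
  simp only [windmillMatrix, mul_one]
  rw [show ((0:ℕ)+1 : ℕ) = 1 by omega]
  rw [edge_hub hn]
  rw [Finset.sum_apply]
  by_cases h : ∃ k₀ : ℕ, k₀ < m ∧ (i:ℕ)+1 = k₀*(n-1)+(n-2)+2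
  · obtain ⟨k₀, hk₀, hik⟩ := h
    rw [if_pos ⟨k₀, hk₀, hik⟩]
    rw [Finset.sum_eq_single (⟨k₀, hk₀⟩ : Fin m)]
    · rw [Pi.single_apply, if_pos (Fin.ext (show (i:ℕ) = k₀*(n-1)+(n-2)+1 by omega))]
    · intro b _ hb
      rw [Pi.single_apply, if_neg]
      intro hc
      apply hb
      have hv : (i:ℕ) = (b:ℕ)*(n-1)+(n-2)+1 := by
        have := congrArg Fin.val hc; simpa using this
      have huq := wm_uniq hn (show n-2 < n-1 by omega) (show n-2 < n-1 by omega)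
        (show (b:ℕ)*(n-1)+(n-2) = k₀*(n-1)+(n-2) by omega)
      exact Fin.ext (show (b:ℕ) = k₀ from huq.1)
    · intro hc; exact absurd (Finset.mem_univ _) hc
  · rw [if_neg h]
    symm
    apply Finset.sum_eq_zero
    intro b _
    rw [Pi.single_apply, if_neg]
    intro hc
    apply h
    refine ⟨(b:ℕ), b.isLt, ?_⟩
    have := congrArg Fin.val hc; simp at this; omega

private lemma pow_partial (hn : 3 ≤ n) {k' i' : ℕ} (hk' : k' < m) (hi' : i' < n-1) :
    ∀ j, j ≤ i' →
      (windmillMatrix m n)^j *ᵥ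
        Pi.single (⟨k'*(n-1)+i'+1, bv_lt hn hk' hi'⟩ : Fin (m*(n-1)+1)) 1
      = Pi.single (⟨k'*(n-1)+(i'-j)+1, bv_lt hn hk' (by omega)⟩ : Fin (m*(n-1)+1)) 1 := by
  intro j
  induction j with
  | zero =>
    intro _
    rw [pow_zero, Matrix.one_mulVec]
    rfl
  | succ j ih =>
    intro hj
    rw [pow_succ', ← Matrix.mulVec_mulVec, ih (by omega)]
    have h2 : i'-(j+1)+1 < n-1 := by omega
    rw [show (⟨k'*(n-1)+(i'-j)+1, bv_lt hn hk' (by omega)⟩ : Fin (m*(n-1)+1))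
        = (⟨k'*(n-1)+((i'-(j+1))+1)+1, bv_lt hn hk' h2⟩ : Fin (m*(n-1)+1)) from
        Fin.ext (show k'*(n-1)+(i'-j)+1 = k'*(n-1)+((i'-(j+1))+1)+1 by omega)]
    exact col_mid hn hk' (by omega)

private lemma pow_to_hub (hn : 3 ≤ n) {k' i' : ℕ} (hk' : k' < m) (hi' : i' < n-1) :
    (windmillMatrix m n)^(i'+1) *ᵥ
      Pi.single (⟨k'*(n-1)+i'+1, bv_lt hn hk' hi'⟩ : Fin (m*(n-1)+1)) 1
    = Pi.single (⟨0, Nat.succ_pos _⟩ : Fin (m*(n-1)+1)) 1 := by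
  rw [pow_succ', ← Matrix.mulVec_mulVec, pow_partial hn hk' hi' i' le_rfl]
  rw [show (⟨k'*(n-1)+(i'-i')+1, bv_lt hn hk' (by omega)⟩ : Fin (m*(n-1)+1))
      = (⟨k'*(n-1)+0+1, bv_lt hn hk' (by omega)⟩ : Fin (m*(n-1)+1)) from
      Fin.ext (show k'*(n-1)+(i'-i')+1 = k'*(n-1)+0+1 by omega)]
  exact col_first hn hk'

private lemma wm_mulVec_sum {α : Type*} [Fintype α] (A : Matrix (Fin (m*(n-1)+1)) (Fin (m*(n-1)+1)) ℝ)
    (f : α → (Fin (m*(n-1)+1) → ℝ)) :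
    A *ᵥ (∑ a, f a) = ∑ a, A *ᵥ f a := by
  rw [← Matrix.mulVecLin_apply, map_sum]
  simp [Matrix.mulVecLin_apply]

private lemma pow_n_hub (hn : 3 ≤ n) (hm : 2 ≤ m) :
    (windmillMatrix m n)^n *ᵥ Pi.single (⟨0, Nat.succ_pos _⟩ : Fin (m*(n-1)+1)) 1
      = (m:ℝ) • (Pi.single (⟨0, Nat.succ_pos _⟩ : Fin (m*(n-1)+1)) 1 : Fin (m*(n-1)+1) → ℝ) := by
  rw [show (windmillMatrix m n)^n = (windmillMatrix m n)^(n-1) * windmillMatrix m n by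
    rw [← pow_succ]; congr 1; omega]
  rw [← Matrix.mulVec_mulVec, col_hub hn hm, wm_mulVec_sum]
  have step : ∀ k' : Fin m, (windmillMatrix m n)^(n-1) *ᵥ Pi.single
      (⟨(k':ℕ)*(n-1)+(n-2)+1, bv_lt hn k'.isLt (by omega)⟩ : Fin (m*(n-1)+1)) 1
      = Pi.single (⟨0, Nat.succ_pos _⟩ : Fin (m*(n-1)+1)) 1 := by
    intro k'
    have h := pow_to_hub hn (k'.isLt) (show n-2 < n-1 by omega)
    rw [show (n-2)+1 = n-1 by omega] at h
    exact h
  rw [Finset.sum_congr rfl (fun k' _ => step k'), Finset.sum_const]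
  simp [Finset.card_univ, ← Nat.cast_smul_eq_nsmul ℝ]

private lemma key_col (hn : 3 ≤ n) (hm : 2 ≤ m) (j : Fin (m*(n-1)+1)) :
    (windmillMatrix m n)^(2*n-1) *ᵥ Pi.single j 1
      = (m:ℝ) • ((windmillMatrix m n)^(n-1) *ᵥ Pi.single j 1) := by
  by_cases h0 : (j:ℕ) = 0
  · have hj : j = (⟨0, Nat.succ_pos _⟩ : Fin (m*(n-1)+1)) := Fin.ext h0
    subst hj
    rw [show (windmillMatrix m n)^(2*n-1) = (windmillMatrix m n)^(n-1) * (windmillMatrix m n)^n by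
      rw [← pow_add]; congr 1; omega]
    rw [← Matrix.mulVec_mulVec, pow_n_hub hn hm, Matrix.mulVec_smul]
  · have hn1 : 0 < n-1 := by omega
    set k' := ((j:ℕ)-1)/(n-1) with hk'def
    set i' := ((j:ℕ)-1)%(n-1) with hi'def
    have hdm := Nat.div_add_mod ((j:ℕ)-1) (n-1)
    rw [← hk'def, ← hi'def] at hdm
    have hcomm : (n-1)*k' = k'*(n-1) := Nat.mul_comm _ _
    have hdecomp : (j:ℕ) = k'*(n-1)+i'+1 := by omega
    have hi' : i' < n-1 := Nat.mod_lt _ hn1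
    have hk' : k' < m := by
      by_contra hcge
      push_neg at hcge
      have hle : m*(n-1) ≤ k'*(n-1) := Nat.mul_le_mul_right _ hcge
      have hjlt := j.isLt
      omega
    have hj : j = (⟨k'*(n-1)+i'+1, bv_lt hn hk' hi'⟩ : Fin (m*(n-1)+1)) := Fin.ext hdecomp
    rw [hj]
    have e1 : (windmillMatrix m n)^(n-1) *ᵥ
        Pi.single (⟨k'*(n-1)+i'+1, bv_lt hn hk' hi'⟩ : Fin (m*(n-1)+1)) 1
        = (windmillMatrix m n)^(n-2-i') *ᵥ
          Pi.single (⟨0, Nat.succ_pos _⟩ : Fin (m*(n-1)+1)) 1 := by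
      rw [show (windmillMatrix m n)^(n-1)
          = (windmillMatrix m n)^(n-2-i') * (windmillMatrix m n)^(i'+1) by
        rw [← pow_add]; congr 1; omega]
      rw [← Matrix.mulVec_mulVec, pow_to_hub hn hk' hi']
    have e2 : (windmillMatrix m n)^(2*n-1) *ᵥ
        Pi.single (⟨k'*(n-1)+i'+1, bv_lt hn hk' hi'⟩ : Fin (m*(n-1)+1)) 1
        = (windmillMatrix m n)^(n-2-i') *ᵥ
          ((m:ℝ) • (Pi.single (⟨0, Nat.succ_pos _⟩ : Fin (m*(n-1)+1)) 1 : Fin (m*(n-1)+1) → ℝ)) := by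
      rw [show (windmillMatrix m n)^(2*n-1)
          = (windmillMatrix m n)^(n-2-i') * (windmillMatrix m n)^n * (windmillMatrix m n)^(i'+1) by
        rw [← pow_add, ← pow_add]; congr 1; omega]
      rw [← Matrix.mulVec_mulVec, ← Matrix.mulVec_mulVec, pow_to_hub hn hk' hi', pow_n_hub hn hm]
    rw [e1, e2, Matrix.mulVec_smul]

private lemma key_identity (hn : 3 ≤ n) (hm : 2 ≤ m) :
    (windmillMatrix m n)^(2*n-1) = (m:ℝ) • (windmillMatrix m n)^(n-1) := by
  ext i j
  have h := congrFun (key_col hn hm j) i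
  rw [Matrix.mulVec_single] at h
  simp only [Pi.smul_apply, Matrix.mulVec_single, mul_one] at h
  rw [Matrix.smul_apply]
  simpa using h

end WindmillAux

open Matrix

theorem windmillMatrix_drazin_index (m n : ℕ) (hm : 2 ≤ m) (hn : 3 ≤ n) :
    IsLeast {k : ℕ | ((windmillMatrix m n)^(k+1)).rank = ((windmillMatrix m n)^k).rank}
      (n-1) := by
  constructor
  · -- membership : rank M^((n-1)+1) = rank M^(n-1)
    show ((windmillMatrix m n)^((n-1)+1)).rank = ((windmillMatrix m n)^(n-1)).rank
    rw [show (n-1)+1 = n by omega]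
    apply le_antisymm
    · rw [show (windmillMatrix m n)^n = windmillMatrix m n * (windmillMatrix m n)^(n-1) by
        rw [← pow_succ']; congr 1; omega]
      exact Matrix.rank_mul_le_right _ _
    · have hsmul : (m:ℝ) • (windmillMatrix m n)^(n-1)
          = ((m:ℝ) • (1 : Matrix (Fin (m*(n-1)+1)) (Fin (m*(n-1)+1)) ℝ)) * (windmillMatrix m n)^(n-1) := by
        rw [Matrix.smul_mul, one_mul]
      have hdet : IsUnit (((m:ℝ) • (1 : Matrix (Fin (m*(n-1)+1)) (Fin (m*(n-1)+1)) ℝ)).det) := by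
        rw [Matrix.det_smul, Matrix.det_one, mul_one]
        apply IsUnit.pow
        simp only [isUnit_iff_ne_zero, ne_eq, Nat.cast_eq_zero]
        omega
      have h1 : ((windmillMatrix m n)^(n-1)).rank = ((m:ℝ) • (windmillMatrix m n)^(n-1)).rank := by
        rw [hsmul, Matrix.rank_mul_eq_right_of_isUnit_det _ _ hdet]
      rw [h1, ← key_identity hn hm]
      rw [show (windmillMatrix m n)^(2*n-1) = (windmillMatrix m n)^n * (windmillMatrix m n)^(n-1) by
        rw [← pow_add]; congr 1; omega]
      exact Matrix.rank_mul_le_left _ _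
  · -- lower bound
    intro k hk
    simp only [Set.mem_setOf_eq] at hk
    by_contra hc
    push_neg at hc
    have hkn : k < n-1 := hc
    have h0m : 0 < m := by omega
    have h1m : 1 < m := by omega
    set x : Fin (m*(n-1)+1) → ℝ :=
      Pi.single (⟨0*(n-1)+k+1, bv_lt hn h0m hkn⟩ : Fin (m*(n-1)+1)) 1
      - Pi.single (⟨1*(n-1)+k+1, bv_lt hn h1m hkn⟩ : Fin (m*(n-1)+1)) 1 with hx
    have hxk : (windmillMatrix m n)^k *ᵥ x
        = Pi.single (⟨0*(n-1)+(k-k)+1, bv_lt hn h0m (by omega)⟩ : Fin (m*(n-1)+1)) 1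
        - Pi.single (⟨1*(n-1)+(k-k)+1, bv_lt hn h1m (by omega)⟩ : Fin (m*(n-1)+1)) 1 := by
      rw [hx, Matrix.mulVec_sub,
        pow_partial hn h0m hkn k le_rfl,
        pow_partial hn h1m hkn k le_rfl]
    have hxk1 : (windmillMatrix m n)^(k+1) *ᵥ x = 0 := by
      rw [hx, Matrix.mulVec_sub,
        pow_to_hub hn h0m hkn,
        pow_to_hub hn h1m hkn, sub_self]
    have hxkne : (windmillMatrix m n)^k *ᵥ x ≠ 0 := by
      rw [hxk]
      intro hzero
      have hz := congrFun hzero (⟨0*(n-1)+(k-k)+1, bv_lt hn h0m (by omega)⟩ : Fin (m*(n-1)+1))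
      simp only [Pi.sub_apply, Pi.zero_apply] at hz
      rw [Pi.single_apply, Pi.single_apply, if_pos rfl, if_neg] at hz
      · norm_num at hz
      · intro hcc
        have hvv := congrArg Fin.val hcc
        simp only [Fin.val_mk] at hvv
        omega
    have hker_le : LinearMap.ker ((windmillMatrix m n)^k).mulVecLin
        ≤ LinearMap.ker ((windmillMatrix m n)^(k+1)).mulVecLin := by
      intro v hv
      rw [LinearMap.mem_ker, Matrix.mulVecLin_apply] at hv ⊢
      rw [pow_succ', ← Matrix.mulVec_mulVec, hv, Matrix.mulVec_zero]
    have hfin1 := LinearMap.finrank_range_add_finrank_ker ((windmillMatrix m n)^k).mulVecLin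
    have hfin2 := LinearMap.finrank_range_add_finrank_ker ((windmillMatrix m n)^(k+1)).mulVecLin
    have hrank1 : ((windmillMatrix m n)^k).rank
        = Module.finrank ℝ (LinearMap.range ((windmillMatrix m n)^k).mulVecLin) := rfl
    have hrank2 : ((windmillMatrix m n)^(k+1)).rank
        = Module.finrank ℝ (LinearMap.range ((windmillMatrix m n)^(k+1)).mulVecLin) := rfl
    have hker_eq : LinearMap.ker ((windmillMatrix m n)^k).mulVecLin
        = LinearMap.ker ((windmillMatrix m n)^(k+1)).mulVecLin := by
      apply Submodule.eq_of_le_of_finrank_le hker_le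
      omega
    have hxmem : x ∈ LinearMap.ker ((windmillMatrix m n)^(k+1)).mulVecLin := by
      rw [LinearMap.mem_ker, Matrix.mulVecLin_apply]; exact hxk1
    rw [← hker_eq, LinearMap.mem_ker, Matrix.mulVecLin_apply] at hxmem
    exact hxkne hxmem
end

section
/- Let M be the adjacency matrix of the oriented Dutch windmill graph D^m_n with m ≥ 2 and n ≥ 3, and let X = (1/m) · M^(n-1). Then X satisfies the Drazin inverse equations: M^n · X = M^(n-1), X · M · X = X, and M · X = X · M. Hence the Drazin inverse of M is (1/m) · M^(n-1). -/
namespace WindmillAux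

/-- "Position" of a 0-indexed vertex along its blade: `0` for the hub,
`(v-1) % (n-1) + 1 ∈ [1, n-1]` otherwise. -/
def posV (n v : ℕ) : ℕ := if v = 0 then 0 else (v-1) % (n-1) + 1

lemma posV_zero (n : ℕ) : posV n 0 = 0 := by simp [posV]

lemma posV_mul_add (hn : 2 ≤ n) (t j : ℕ) (h1 : 1 ≤ j) (h2 : j ≤ n-1) :
    posV n (t*(n-1)+j) = j := by
  have hne : t*(n-1)+j ≠ 0 := by omega
  rw [posV, if_neg hne]
  have h3 : t*(n-1)+j-1 = t*(n-1)+(j-1) := by omega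
  rw [h3, Nat.mul_add_mod', Nat.mod_eq_of_lt (by omega)]
  omega

lemma posV_pos (n : ℕ) {v : ℕ} (hv : v ≠ 0) : 1 ≤ posV n v := by
  rw [posV, if_neg hv]; omega

lemma posV_le (hn : 2 ≤ n) (v : ℕ) : posV n v ≤ n-1 := by
  rw [posV]; split
  · omega
  · have := Nat.mod_lt (v-1) (y := n-1) (by omega); omega

lemma posV_decomp (hn : 2 ≤ n) {v : ℕ} (hv : v ≠ 0) :
    ∃ t, v = t*(n-1) + posV n v := by
  refine ⟨(v-1)/(n-1), ?_⟩
  rw [posV, if_neg hv, Nat.mul_comm]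
  have h := Nat.div_add_mod (v-1) (n-1)
  omega

lemma posV_max (hn : 2 ≤ n) (hm : 1 ≤ m) : posV n (m*(n-1)) = n-1 := by
  obtain ⟨k, rfl⟩ : ∃ k, m = k+1 := ⟨m-1, by omega⟩
  have h : (k+1)*(n-1) = k*(n-1)+(n-1) := by ring
  rw [h, posV_mul_add hn _ _ (by omega) le_rfl]

lemma posV_succ (hn : 2 ≤ n) {v : ℕ} (hv : v ≠ 0) (h : posV n v ≤ n-2) :
    posV n (v+1) = posV n v + 1 := by
  obtain ⟨t, ht⟩ := posV_decomp hn hv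
  have h1 := posV_pos n hv
  have h2 : v + 1 = t*(n-1) + (posV n v + 1) := by omega
  rw [h2, posV_mul_add hn _ _ (by omega) (by omega)]

lemma edge_iff {m n : ℕ} (hm : 2 ≤ m) (hn : 3 ≤ n) {v w : ℕ}
    (hv : v ≤ m*(n-1)) (hw : w ≤ m*(n-1)) :
    windmillEdge m n (v+1) (w+1) ↔
      (v = 0 ∧ posV n w = 1) ∨
      (v ≠ 0 ∧ posV n v ≤ n-2 ∧ w = v+1) ∨
      (v ≠ 0 ∧ posV n v = n-1 ∧ w = 0) := by
  have hn2 : 2 ≤ n := by omega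
  constructor
  · rintro (⟨k, hk1, hk2, ha, hb⟩ | ⟨k, i, hk1, hk2, hi1, hi2, ha, hb⟩ |
      ⟨k, hk1, hk2, ha, hb⟩)
    · left
      have hw' : w = (k-1)*(n-1) + 1 := by omega
      exact ⟨by omega, by rw [hw', posV_mul_add hn2 _ _ le_rfl (by omega)]⟩
    · right; left
      have hv' : v = (k-1)*(n-1) + (i-1) := by omega
      have hp : posV n v = i - 1 := by
        rw [hv', posV_mul_add hn2 _ _ (by omega) (by omega)]
      exact ⟨by omega, by omega, by omega⟩
    · right; right
      have hv' : v = (k-1)*(n-1) + (n-1) := by omega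
      have hp : posV n v = n - 1 := by
        rw [hv', posV_mul_add hn2 _ _ (by omega) le_rfl]
      exact ⟨by omega, hp, by omega⟩
  · rintro (⟨hv0, hw1⟩ | ⟨hv0, hp, hw'⟩ | ⟨hv0, hp, hw0⟩)
    · left
      have hw0 : w ≠ 0 := by
        intro h; rw [h, posV_zero] at hw1; omega
      obtain ⟨t, ht⟩ := posV_decomp hn2 hw0
      rw [hw1] at ht
      have htm : t < m := by
        by_contra h
        push_neg at h
        have : m*(n-1) ≤ t*(n-1) := Nat.mul_le_mul_right _ h
        omega
      refine ⟨t+1, by omega, by omega, by omega, ?_⟩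
      have h1 : t+1-1 = t := rfl
      rw [h1]; omega
    · right; left
      obtain ⟨t, ht⟩ := posV_decomp hn2 hv0
      have h1 := posV_pos n hv0
      have htm : t < m := by
        by_contra h
        push_neg at h
        have : m*(n-1) ≤ t*(n-1) := Nat.mul_le_mul_right _ h
        omega
      refine ⟨t+1, posV n v + 1, by omega, by omega, by omega, by omega, ?_, by omega⟩
      have h2 : t+1-1 = t := rfl
      rw [h2]; omega
    · right; right
      obtain ⟨t, ht⟩ := posV_decomp hn2 hv0
      have htm : t < m := by
        by_contra h
        push_neg at h
        have : m*(n-1) ≤ t*(n-1) := Nat.mul_le_mul_right _ h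
        omega
      refine ⟨t+1, by omega, by omega, ?_, by omega⟩
      have h2 : t+1-1 = t := rfl
      rw [h2]; omega

lemma posV_div_decomp (hn : 2 ≤ n) {v : ℕ} (hv : v ≠ 0) :
    v = ((v-1)/(n-1))*(n-1) + posV n v := by
  rw [posV, if_neg hv, Nat.mul_comm]
  have h := Nat.div_add_mod (v-1) (n-1)
  omega

/-- Collapse matrix: row `p` is the indicator of vertices at position `p`. -/
noncomputable def Pmat (m n : ℕ) : Matrix (Fin n) (Fin (m*(n-1)+1)) ℝ :=
  fun p v => if posV n (v:ℕ) = (p:ℕ) then 1 else 0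

/-- Weighted `n`-cycle. -/
noncomputable def Cmat (m n : ℕ) : Matrix (Fin n) (Fin n) ℝ :=
  fun p q => if (p:ℕ)+1 = (q:ℕ) then 1 else
    if (p:ℕ) = n-1 ∧ (q:ℕ) = 0 then (m:ℝ) else 0

noncomputable def Rmat (m n : ℕ) : Matrix (Fin (m*(n-1)+1)) (Fin n) ℝ :=
  fun v q => if (v:ℕ) = 0 then (if (q:ℕ) = n-1 then 1 else 0)
             else (if (q:ℕ)+1 = posV n (v:ℕ) then 1 else 0)

lemma M_apply_of_zero {m n : ℕ} (hm : 2 ≤ m) (hn : 3 ≤ n)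
    {v : Fin (m*(n-1)+1)} (hv : (v:ℕ) = 0) (w : Fin (m*(n-1)+1)) :
    windmillMatrix m n v w = if posV n (w:ℕ) = 1 then 1 else 0 := by
  have hv' : (v:ℕ) ≤ m*(n-1) := by have := v.isLt; omega
  have hw' : (w:ℕ) ≤ m*(n-1) := by have := w.isLt; omega
  rw [windmillMatrix]
  by_cases h1 : posV n (w:ℕ) = 1
  · rw [if_pos ((edge_iff hm hn hv' hw').mpr (Or.inl ⟨hv, h1⟩)), if_pos h1]
  · rw [if_neg, if_neg h1]
    intro hc
    rcases (edge_iff hm hn hv' hw').mp hc with ⟨_, h⟩ | ⟨h, _⟩ | ⟨h, _⟩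
    · exact h1 h
    · exact h hv
    · exact h hv

lemma M_apply_of_mid {m n : ℕ} (hm : 2 ≤ m) (hn : 3 ≤ n)
    {v : Fin (m*(n-1)+1)} (hv : (v:ℕ) ≠ 0)
    (hp : posV n (v:ℕ) ≤ n-2) (w : Fin (m*(n-1)+1)) :
    windmillMatrix m n v w = if (w:ℕ) = (v:ℕ)+1 then 1 else 0 := by
  have hv' : (v:ℕ) ≤ m*(n-1) := by have := v.isLt; omega
  have hw' : (w:ℕ) ≤ m*(n-1) := by have := w.isLt; omega
  rw [windmillMatrix]
  by_cases h1 : (w:ℕ) = (v:ℕ)+1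
  · rw [if_pos ((edge_iff hm hn hv' hw').mpr (Or.inr (Or.inl ⟨hv, hp, h1⟩))),
      if_pos h1]
  · rw [if_neg, if_neg h1]
    intro hc
    rcases (edge_iff hm hn hv' hw').mp hc with ⟨h, _⟩ | ⟨_, _, h⟩ | ⟨_, h, _⟩
    · exact hv h
    · exact h1 h
    · omega

lemma M_apply_of_last {m n : ℕ} (hm : 2 ≤ m) (hn : 3 ≤ n)
    {v : Fin (m*(n-1)+1)} (hv : (v:ℕ) ≠ 0)
    (hp : posV n (v:ℕ) = n-1) (w : Fin (m*(n-1)+1)) :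
    windmillMatrix m n v w = if (w:ℕ) = 0 then 1 else 0 := by
  have hv' : (v:ℕ) ≤ m*(n-1) := by have := v.isLt; omega
  have hw' : (w:ℕ) ≤ m*(n-1) := by have := w.isLt; omega
  rw [windmillMatrix]
  by_cases h1 : (w:ℕ) = 0
  · rw [if_pos ((edge_iff hm hn hv' hw').mpr (Or.inr (Or.inr ⟨hv, hp, h1⟩))),
      if_pos h1]
  · rw [if_neg, if_neg h1]
    intro hc
    rcases (edge_iff hm hn hv' hw').mp hc with ⟨h, _⟩ | ⟨_, h, _⟩ | ⟨_, _, h⟩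
    · exact hv h
    · omega
    · exact h1 h

lemma sum_posV {m n : ℕ} (hm : 2 ≤ m) (hn : 3 ≤ n) {p : ℕ}
    (h1 : 1 ≤ p) (h2 : p ≤ n-1) :
    ∑ v : Fin (m*(n-1)+1), (if posV n (v:ℕ) = p then (1:ℝ) else 0) = m := by
  classical
  rw [Finset.sum_boole]
  norm_cast
  have key : (Finset.univ.filter
      (fun v : Fin (m*(n-1)+1) => posV n (v:ℕ) = p)).card
      = (Finset.univ : Finset (Fin m)).card := by
    refine Finset.card_bij' (fun v hv => (⟨((v:ℕ)-1)/(n-1), ?_⟩ : Fin m))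
      (fun t _ => (⟨(t:ℕ)*(n-1)+p, ?_⟩ : Fin (m*(n-1)+1))) ?_ ?_ ?_ ?_
    · -- div bound
      simp only [Finset.mem_filter, Finset.mem_univ, true_and] at hv
      have hvne : (v:ℕ) ≠ 0 := by
        intro h; rw [h, posV_zero] at hv; omega
      have hd := posV_div_decomp (by omega : 2 ≤ n) hvne
      rw [hv] at hd
      have hv' : (v:ℕ) ≤ m*(n-1) := by have := v.isLt; omega
      by_contra h
      push_neg at h
      have : m*(n-1) ≤ ((v:ℕ)-1)/(n-1)*(n-1) := Nat.mul_le_mul_right _ h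
      omega
    · -- range bound
      have ht : (t:ℕ)+1 ≤ m := t.isLt
      have : ((t:ℕ)+1)*(n-1) ≤ m*(n-1) := Nat.mul_le_mul_right _ ht
      have he : ((t:ℕ)+1)*(n-1) = (t:ℕ)*(n-1)+(n-1) := by ring
      omega
    · intro a ha; exact Finset.mem_univ _
    · intro t ht
      simp only [Finset.mem_filter, Finset.mem_univ, true_and]
      exact posV_mul_add (by omega) _ _ h1 h2
    · intro v hv
      simp only [Finset.mem_filter, Finset.mem_univ, true_and] at hv
      have hvne : (v:ℕ) ≠ 0 := by
        intro h; rw [h, posV_zero] at hv; omega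
      have hd := posV_div_decomp (by omega : 2 ≤ n) hvne
      rw [hv] at hd
      refine Fin.ext ?_
      show ((v:ℕ)-1)/(n-1)*(n-1)+p = (v:ℕ)
      omega
    · intro t ht
      refine Fin.ext ?_
      show ((t:ℕ)*(n-1)+p-1)/(n-1) = (t:ℕ)
      have he : (t:ℕ)*(n-1)+p-1 = (p-1) + (t:ℕ)*(n-1) := by omega
      rw [he, Nat.add_mul_div_right _ _ (by omega : 0 < n-1),
        Nat.div_eq_of_lt (by omega)]
      omega
  rw [key, Finset.card_univ, Fintype.card_fin]


lemma Crow {m n : ℕ} (hm : 2 ≤ m) (hn : 3 ≤ n) :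
    ∀ s, s ≤ n-1 → ∀ q : Fin n,
      (Cmat m n ^ s) ⟨0, by omega⟩ q = if (q:ℕ) = s then 1 else 0 := by
  intro s
  induction s with
  | zero =>
    intro _ q
    rw [pow_zero, Matrix.one_apply]
    by_cases h : (q:ℕ) = 0
    · rw [if_pos (Fin.ext h.symm), if_pos h]
    · rw [if_neg (by simp [Fin.ext_iff]; omega), if_neg h]
  | succ s ih =>
    intro hs q
    rw [pow_succ, Matrix.mul_apply]
    rw [Finset.sum_eq_single_of_mem (⟨s, by omega⟩ : Fin n) (Finset.mem_univ _)]
    · have hv : ((⟨s, by omega⟩ : Fin n) : ℕ) = s := rfl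
      rw [ih (by omega), if_pos hv, one_mul, Cmat]
      by_cases h : (q:ℕ) = s+1
      · rw [if_pos (show ((⟨s, by omega⟩ : Fin n) : ℕ)+1 = (q:ℕ) from by
          rw [hv, h]), if_pos h]
      · rw [if_neg (show ¬(((⟨s, by omega⟩ : Fin n) : ℕ)+1 = (q:ℕ)) from by
          rw [hv]; omega),
          if_neg (show ¬(((⟨s, by omega⟩ : Fin n) : ℕ) = n-1 ∧ (q:ℕ) = 0) from by
          rw [hv]; rintro ⟨h1, h2⟩; omega), if_neg h]
    · intro r _ hr
      rw [ih (by omega), if_neg (by simpa [Fin.ext_iff] using hr), zero_mul]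

lemma PM {m n : ℕ} (hm : 2 ≤ m) (hn : 3 ≤ n) :
    Pmat m n * windmillMatrix m n = Cmat m n * Pmat m n := by
  ext p w
  rw [Matrix.mul_apply, Matrix.mul_apply]
  have hp := p.isLt
  rcases Nat.eq_zero_or_pos (p:ℕ) with hp0 | hp1
  · -- p = 0
    rw [Finset.sum_eq_single_of_mem (0 : Fin (m*(n-1)+1)) (Finset.mem_univ _)]
    · rw [Finset.sum_eq_single_of_mem (⟨1, by omega⟩ : Fin n) (Finset.mem_univ _)]
      · rw [show (Pmat m n) p 0 = 1 from by
          simp [Pmat, posV_zero, hp0], one_mul]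
        rw [M_apply_of_zero hm hn (by simp) w]
        rw [show (Cmat m n) p ⟨1, by omega⟩ = 1 from by simp [Cmat, hp0], one_mul]
        rfl
      · intro q _ hq
        rw [show (Cmat m n) p q = 0 from by
          simp only [Cmat]
          rw [if_neg (by simp [Fin.ext_iff] at hq; omega), if_neg (by omega)],
          zero_mul]
    · intro v _ hv
      rw [show (Pmat m n) p v = 0 from by
        simp only [Pmat]
        rw [if_neg ?_]
        have : (v:ℕ) ≠ 0 := fun h => hv (Fin.ext h)
        have := posV_pos n this
        omega, zero_mul]
  · rcases Nat.lt_or_ge (p:ℕ) (n-1) with hplt | hpge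
    · -- 1 ≤ p ≤ n-2 : RHS = [posV w = p+1]
      have hRHS : ∑ q : Fin n, (Cmat m n) p q * (Pmat m n) q w
          = (if posV n (w:ℕ) = (p:ℕ)+1 then (1:ℝ) else 0) := by
        rw [Finset.sum_eq_single_of_mem (⟨(p:ℕ)+1, by omega⟩ : Fin n)
            (Finset.mem_univ _)]
        · rw [show (Cmat m n) p ⟨(p:ℕ)+1, by omega⟩ = 1 from by
            simp [Cmat], one_mul]
          rfl
        · intro q _ hq
          rw [show (Cmat m n) p q = 0 from by
            simp only [Cmat]
            rw [if_neg (by simp [Fin.ext_iff] at hq; omega), if_neg (by omega)],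
            zero_mul]
      rw [hRHS]
      by_cases hw : posV n (w:ℕ) = (p:ℕ)+1
      · -- unique contributor v0 = w-1
        have hwne : (w:ℕ) ≠ 0 := by
          intro h; rw [h, posV_zero] at hw; omega
        have hd := posV_div_decomp (by omega : 2 ≤ n) hwne
        rw [hw] at hd
        set t := ((w:ℕ)-1)/(n-1) with htdef
        have hv0lt : (w:ℕ)-1 < m*(n-1)+1 := by have := w.isLt; omega
        set v0 : Fin (m*(n-1)+1) := ⟨(w:ℕ)-1, hv0lt⟩ with hv0def
        have hv0val : (v0:ℕ) = t*(n-1) + (p:ℕ) := by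
          show (w:ℕ)-1 = t*(n-1) + (p:ℕ); omega
        have hposv0 : posV n (v0:ℕ) = (p:ℕ) := by
          rw [hv0val, posV_mul_add (by omega) _ _ (by omega) (by omega)]
        have hv0ne : (v0:ℕ) ≠ 0 := by
          intro h; rw [h, posV_zero] at hposv0; omega
        rw [Finset.sum_eq_single_of_mem v0 (Finset.mem_univ _)]
        · rw [show (Pmat m n) p v0 = 1 from by simp [Pmat, hposv0], one_mul]
          rw [M_apply_of_mid hm hn hv0ne (by omega) w]
          rw [if_pos (by show (w:ℕ) = (v0:ℕ)+1; omega), if_pos hw]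
        · intro v _ hv
          by_cases hpv : posV n (v:ℕ) = (p:ℕ)
          · have hvne : (v:ℕ) ≠ 0 := by
              intro h; rw [h, posV_zero] at hpv; omega
            rw [M_apply_of_mid hm hn hvne (by omega) w]
            rw [if_neg, mul_zero]
            intro hc
            exact hv (Fin.ext (by omega))
          · rw [show (Pmat m n) p v = 0 from by
              simp only [Pmat]; rw [if_neg hpv], zero_mul]
      · rw [if_neg hw]
        refine Finset.sum_eq_zero fun v _ => ?_
        by_cases hpv : posV n (v:ℕ) = (p:ℕ)
        · have hvne : (v:ℕ) ≠ 0 := by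
            intro h; rw [h, posV_zero] at hpv; omega
          rw [M_apply_of_mid hm hn hvne (by omega) w]
          rw [if_neg, mul_zero]
          intro hc
          have := posV_succ (by omega : 2 ≤ n) hvne (by omega)
          rw [hc] at hw
          omega
        · rw [show (Pmat m n) p v = 0 from by
            simp only [Pmat]; rw [if_neg hpv], zero_mul]
    · -- p = n-1
      have hpe : (p:ℕ) = n-1 := by omega
      have hRHS : ∑ q : Fin n, (Cmat m n) p q * (Pmat m n) q w
          = (m:ℝ) * (if (w:ℕ) = 0 then 1 else 0) := by
        rw [Finset.sum_eq_single_of_mem (⟨0, by omega⟩ : Fin n)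
            (Finset.mem_univ _)]
        · rw [show (Cmat m n) p ⟨0, by omega⟩ = (m:ℝ) from by
            simp only [Cmat]
            rw [if_neg (by omega), if_pos ⟨hpe, trivial⟩]]
          congr 1
          have h0 : ((⟨0, by omega⟩ : Fin n) : ℕ) = 0 := rfl
          simp only [Pmat, h0]
          by_cases h : (w:ℕ) = 0
          · rw [if_pos (by rw [h, posV_zero]), if_pos h]
          · rw [if_neg (by have := posV_pos n h; omega), if_neg h]
        · intro q _ hq
          rw [show (Cmat m n) p q = 0 from by
            simp only [Cmat]
            rw [if_neg (by omega), if_neg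
              (by simp [Fin.ext_iff] at hq; intro hc; exact hq hc.2)],
            zero_mul]
      rw [hRHS]
      by_cases hw : (w:ℕ) = 0
      · rw [if_pos hw, mul_one]
        have : ∀ v : Fin (m*(n-1)+1), (Pmat m n) p v * windmillMatrix m n v w
            = (if posV n (v:ℕ) = n-1 then (1:ℝ) else 0) := by
          intro v
          by_cases hpv : posV n (v:ℕ) = n-1
          · have hvne : (v:ℕ) ≠ 0 := by
              intro h; rw [h, posV_zero] at hpv; omega
            rw [M_apply_of_last hm hn hvne hpv w, if_pos hw,
              show (Pmat m n) p v = 1 from by simp [Pmat, hpv, hpe],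
              one_mul, if_pos hpv]
          · rw [show (Pmat m n) p v = 0 from by
              simp only [Pmat]; rw [if_neg (by omega)], zero_mul, if_neg hpv]
        rw [Finset.sum_congr rfl (fun v _ => this v)]
        exact sum_posV hm hn (by omega) le_rfl
      · rw [if_neg hw, mul_zero]
        refine Finset.sum_eq_zero fun v _ => ?_
        by_cases hpv : posV n (v:ℕ) = n-1
        · have hvne : (v:ℕ) ≠ 0 := by
            intro h; rw [h, posV_zero] at hpv; omega
          rw [M_apply_of_last hm hn hvne hpv w, if_neg hw, mul_zero]
        · rw [show (Pmat m n) p v = 0 from by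
            simp only [Pmat]; rw [if_neg (by omega)], zero_mul]


lemma PMpow {m n : ℕ} (hm : 2 ≤ m) (hn : 3 ≤ n) (s : ℕ) :
    Pmat m n * (windmillMatrix m n)^s = (Cmat m n)^s * Pmat m n := by
  induction s with
  | zero => rw [pow_zero, pow_zero, Matrix.mul_one, Matrix.one_mul]
  | succ s ih =>
    rw [pow_succ, pow_succ, ← Matrix.mul_assoc, ih, Matrix.mul_assoc,
      PM hm hn, ← Matrix.mul_assoc]

lemma row0 {m n : ℕ} (hm : 2 ≤ m) (hn : 3 ≤ n) {s : ℕ} (hs : s ≤ n-1)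
    {v : Fin (m*(n-1)+1)} (hv : (v:ℕ) = 0) (w : Fin (m*(n-1)+1)) :
    ((windmillMatrix m n)^s) v w = if posV n (w:ℕ) = s then 1 else 0 := by
  have h := congrFun (congrFun (PMpow hm hn s) ⟨0, by omega⟩) w
  rw [Matrix.mul_apply, Matrix.mul_apply] at h
  have hL : ∑ u, Pmat m n ⟨0, by omega⟩ u * ((windmillMatrix m n)^s) u w
      = ((windmillMatrix m n)^s) v w := by
    rw [Finset.sum_eq_single_of_mem v (Finset.mem_univ _)]
    · rw [show Pmat m n ⟨0, by omega⟩ v = 1 from by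
        simp only [Pmat]
        rw [if_pos (by rw [hv, posV_zero])], one_mul]
    · intro u _ hu
      rw [show Pmat m n ⟨0, by omega⟩ u = 0 from by
        simp only [Pmat]
        rw [if_neg ?_]
        have hu0 : (u:ℕ) ≠ 0 := fun hc => hu (Fin.ext (by rw [hc, hv]))
        have h1 := posV_pos n hu0
        intro hc
        omega, zero_mul]
  have hR : ∑ q, (Cmat m n ^ s) ⟨0, by omega⟩ q * Pmat m n q w
      = (if posV n (w:ℕ) = s then (1:ℝ) else 0) := by
    rw [Finset.sum_eq_single_of_mem (⟨s, by omega⟩ : Fin n) (Finset.mem_univ _)]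
    · rw [Crow hm hn s hs, if_pos rfl, one_mul]
      rfl
    · intro q _ hq
      rw [Crow hm hn s hs,
        if_neg (fun hc => hq (Fin.ext (by rw [hc]))), zero_mul]
  rw [← hL, h, hR]

lemma rowv {m n : ℕ} (hm : 2 ≤ m) (hn : 3 ≤ n) :
    ∀ j, j ≤ n-2 → ∀ v : Fin (m*(n-1)+1), (v:ℕ) ≠ 0 →
      posV n (v:ℕ) = n-1-j → ∀ w,
      ((windmillMatrix m n)^(j+1)) v w = if (w:ℕ) = 0 then 1 else 0 := by
  intro j
  induction j with
  | zero =>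
    intro _ v hv hp w
    rw [pow_one]
    exact M_apply_of_last hm hn hv (by omega) w
  | succ j ih =>
    intro hj v hv hp w
    have hple : posV n (v:ℕ) ≤ n-2 := by omega
    have hvlt : (v:ℕ) < m*(n-1) := by
      have h1 := v.isLt
      rcases Nat.lt_or_ge (v:ℕ) (m*(n-1)) with h | h
      · exact h
      · exfalso
        have : (v:ℕ) = m*(n-1) := by omega
        rw [this, posV_max (by omega) (by omega)] at hp
        omega
    set v' : Fin (m*(n-1)+1) := ⟨(v:ℕ)+1, by omega⟩ with hv'def
    rw [pow_succ', Matrix.mul_apply]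
    rw [Finset.sum_eq_single_of_mem v' (Finset.mem_univ _)]
    · rw [M_apply_of_mid hm hn hv hple v', if_pos rfl, one_mul]
      refine ih (by omega) v' (by simp [hv'def]) ?_ w
      show posV n ((v:ℕ)+1) = n-1-j
      rw [posV_succ (by omega) hv hple]
      omega
    · intro u _ hu
      rw [M_apply_of_mid hm hn hv hple u,
        if_neg (fun hc => hu (Fin.ext hc)), zero_mul]

lemma A_eq {m n : ℕ} (hm : 2 ≤ m) (hn : 3 ≤ n) :
    (windmillMatrix m n)^(n-1) = Rmat m n * Pmat m n := by
  ext v w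
  rw [Matrix.mul_apply]
  by_cases hv : (v:ℕ) = 0
  · rw [row0 hm hn le_rfl hv w]
    rw [Finset.sum_eq_single_of_mem (⟨n-1, by omega⟩ : Fin n)
        (Finset.mem_univ _)]
    · rw [show Rmat m n v ⟨n-1, by omega⟩ = 1 from by
        simp only [Rmat]
        rw [if_pos hv, if_pos trivial], one_mul]
      rfl
    · intro q _ hq
      rw [show Rmat m n v q = 0 from by
        simp only [Rmat]
        rw [if_pos hv, if_neg (fun hc => hq (Fin.ext (by rw [hc])))],
        zero_mul]
  · have h1 := posV_pos n hv
    have h2 := posV_le (by omega : 2 ≤ n) (v:ℕ)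
    set p := posV n (v:ℕ) with hpdef
    have hMsplit : (windmillMatrix m n)^(n-1)
        = (windmillMatrix m n)^(n-1-p+1) * (windmillMatrix m n)^(p-1) := by
      rw [← pow_add]
      congr 1
      omega
    rw [hMsplit, Matrix.mul_apply]
    rw [Finset.sum_eq_single_of_mem (0 : Fin (m*(n-1)+1)) (Finset.mem_univ _)]
    · rw [rowv hm hn (n-1-p) (by omega) v hv (by omega) 0,
        if_pos (by simp), one_mul]
      rw [row0 hm hn (by omega : p-1 ≤ n-1) (by simp) w]
      rw [Finset.sum_eq_single_of_mem (⟨p-1, by omega⟩ : Fin n)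
          (Finset.mem_univ _)]
      · rw [show Rmat m n v ⟨p-1, by omega⟩ = 1 from by
          simp only [Rmat]
          rw [if_neg hv, if_pos (show (p-1)+1 = p by omega)], one_mul]
        rfl
      · intro q _ hq
        rw [show Rmat m n v q = 0 from by
          simp only [Rmat]
          rw [if_neg hv, if_neg (fun hc => hq (Fin.ext (by
            show (q:ℕ) = p-1
            omega)))], zero_mul]
    · intro u _ hu
      rw [rowv hm hn (n-1-p) (by omega) v hv (by omega) u,
        if_neg (fun hc => hu (Fin.ext (by rw [hc]; exact rfl))), zero_mul]


lemma PR_apply {m n : ℕ} (hm : 2 ≤ m) (hn : 3 ≤ n) (p q : Fin n) :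
    (Pmat m n * Rmat m n) p q =
      if (p:ℕ) = 0 then (if (q:ℕ) = n-1 then 1 else 0)
      else (if (q:ℕ)+1 = (p:ℕ) then (m:ℝ) else 0) := by
  rw [Matrix.mul_apply]
  by_cases hp : (p:ℕ) = 0
  · rw [if_pos hp]
    rw [Finset.sum_eq_single_of_mem (0 : Fin (m*(n-1)+1)) (Finset.mem_univ _)]
    · rw [show Pmat m n p 0 = 1 from by
        simp only [Pmat]
        rw [if_pos (by rw [hp]; exact posV_zero n)], one_mul]
      simp only [Rmat]
      rw [if_pos (show ((0 : Fin (m*(n-1)+1)):ℕ) = 0 from rfl)]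
    · intro v _ hv
      rw [show Pmat m n p v = 0 from by
        simp only [Pmat]
        rw [if_neg ?_]
        have hv0 : (v:ℕ) ≠ 0 := fun hc => hv (Fin.ext (by rw [hc]; exact rfl))
        have := posV_pos n hv0
        omega, zero_mul]
  · rw [if_neg hp]
    have hp1 : 1 ≤ (p:ℕ) := by omega
    have hp2 : (p:ℕ) ≤ n-1 := by have := p.isLt; omega
    by_cases hq : (q:ℕ)+1 = (p:ℕ)
    · rw [if_pos hq]
      have : ∀ v : Fin (m*(n-1)+1), Pmat m n p v * Rmat m n v q
          = (if posV n (v:ℕ) = (p:ℕ) then (1:ℝ) else 0) := by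
        intro v
        by_cases hpv : posV n (v:ℕ) = (p:ℕ)
        · have hvne : (v:ℕ) ≠ 0 := by
            intro h; rw [h, posV_zero] at hpv; omega
          rw [show Pmat m n p v = 1 from by simp [Pmat, hpv], one_mul,
            if_pos hpv]
          simp only [Rmat]
          rw [if_neg hvne, if_pos (by rw [hpv]; exact hq)]
        · rw [show Pmat m n p v = 0 from by
            simp only [Pmat]; rw [if_neg hpv], zero_mul, if_neg hpv]
      rw [Finset.sum_congr rfl (fun v _ => this v)]
      exact sum_posV hm hn hp1 hp2
    · rw [if_neg hq]
      refine Finset.sum_eq_zero fun v _ => ?_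
      by_cases hpv : posV n (v:ℕ) = (p:ℕ)
      · have hvne : (v:ℕ) ≠ 0 := by
          intro h; rw [h, posV_zero] at hpv; omega
        rw [show Rmat m n v q = 0 from by
          simp only [Rmat]
          rw [if_neg hvne, if_neg (by rw [hpv]; exact hq)], mul_zero]
      · rw [show Pmat m n p v = 0 from by
          simp only [Pmat]; rw [if_neg hpv], zero_mul]

lemma CPR {m n : ℕ} (hm : 2 ≤ m) (hn : 3 ≤ n) :
    Cmat m n * (Pmat m n * Rmat m n) = (m:ℝ) • (1 : Matrix (Fin n) (Fin n) ℝ) := by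
  ext p q
  rw [Matrix.mul_apply, Matrix.smul_apply, Matrix.one_apply, smul_eq_mul]
  by_cases hp : (p:ℕ) = n-1
  · rw [Finset.sum_eq_single_of_mem (⟨0, by omega⟩ : Fin n) (Finset.mem_univ _)]
    · rw [show Cmat m n p ⟨0, by omega⟩ = (m:ℝ) from by
        simp only [Cmat]
        rw [if_neg (by omega), if_pos ⟨hp, trivial⟩]]
      rw [PR_apply hm hn]
      rw [if_pos (show ((⟨0, by omega⟩ : Fin n) : ℕ) = 0 from rfl)]
      by_cases h : (q:ℕ) = n-1
      · rw [if_pos h, if_pos (Fin.ext (by rw [hp, h]))]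
      · rw [if_neg h, if_neg (fun hc : p = q => h (by rw [← hc, hp]))]
    · intro r _ hr
      rw [show Cmat m n p r = 0 from by
        simp only [Cmat]
        rw [if_neg (by have := r.isLt; omega),
          if_neg (fun hc => hr (Fin.ext (by rw [hc.2])))], zero_mul]
  · have hplt : (p:ℕ) < n-1 := by have := p.isLt; omega
    rw [Finset.sum_eq_single_of_mem (⟨(p:ℕ)+1, by omega⟩ : Fin n)
        (Finset.mem_univ _)]
    · rw [show Cmat m n p ⟨(p:ℕ)+1, by omega⟩ = 1 from by
        simp [Cmat], one_mul]
      rw [PR_apply hm hn]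
      rw [if_neg (show ¬(((⟨(p:ℕ)+1, by omega⟩ : Fin n) : ℕ) = 0) from by
        simp)]
      by_cases h : (q:ℕ) = (p:ℕ)
      · rw [if_pos (show (q:ℕ)+1 = ((⟨(p:ℕ)+1, by omega⟩ : Fin n) : ℕ) from by
          simp [h]), if_pos (Fin.ext h.symm), mul_one]
      · rw [if_neg (show ¬((q:ℕ)+1 = ((⟨(p:ℕ)+1, by omega⟩ : Fin n) : ℕ)) from by
          simp; omega), if_neg (fun hc : p = q => h (by rw [hc])), mul_zero]
    · intro r _ hr
      rw [show Cmat m n p r = 0 from by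
        simp only [Cmat]
        rw [if_neg (fun hc => hr (Fin.ext (by rw [← hc]))),
          if_neg (by omega)], zero_mul]

lemma key {m n : ℕ} (hm : 2 ≤ m) (hn : 3 ≤ n) :
    (windmillMatrix m n)^(n-1) * windmillMatrix m n * (windmillMatrix m n)^(n-1)
      = (m:ℝ) • (windmillMatrix m n)^(n-1) := by
  rw [A_eq hm hn]
  rw [Matrix.mul_assoc (Rmat m n) (Pmat m n) (windmillMatrix m n), PM hm hn]
  calc Rmat m n * (Cmat m n * Pmat m n) * (Rmat m n * Pmat m n)
      = Rmat m n * (Cmat m n * (Pmat m n * Rmat m n) * Pmat m n) := by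
        rw [Matrix.mul_assoc, Matrix.mul_assoc, Matrix.mul_assoc,
          Matrix.mul_assoc]
    _ = Rmat m n * ((m:ℝ) • (1 : Matrix (Fin n) (Fin n) ℝ) * Pmat m n) := by
        rw [CPR hm hn]
    _ = (m:ℝ) • (Rmat m n * Pmat m n) := by
        rw [Matrix.smul_mul, Matrix.one_mul, Matrix.mul_smul]

end WindmillAux

theorem windmillMatrix_drazin_inverse (m n : ℕ) (hm : 2 ≤ m) (hn : 3 ≤ n) :
    (windmillMatrix m n)^n * ((1/(m:ℝ)) • (windmillMatrix m n)^(n-1)) =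
      (windmillMatrix m n)^(n-1) ∧
    ((1/(m:ℝ)) • (windmillMatrix m n)^(n-1)) * windmillMatrix m n *
        ((1/(m:ℝ)) • (windmillMatrix m n)^(n-1)) =
      (1/(m:ℝ)) • (windmillMatrix m n)^(n-1) ∧
    windmillMatrix m n * ((1/(m:ℝ)) • (windmillMatrix m n)^(n-1)) =
      ((1/(m:ℝ)) • (windmillMatrix m n)^(n-1)) * windmillMatrix m n := by
  have hm0 : (m:ℝ) ≠ 0 := by
    simp only [ne_eq, Nat.cast_eq_zero]; omega
  have hkey := WindmillAux.key hm hn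
  have hcomm : windmillMatrix m n * (windmillMatrix m n)^(n-1)
      = (windmillMatrix m n)^(n-1) * windmillMatrix m n :=
    (pow_succ' (windmillMatrix m n) (n-1)).symm.trans
      (pow_succ (windmillMatrix m n) (n-1))
  have hn1 : n - 1 + 1 = n := by omega
  refine ⟨?_, ?_, ?_⟩
  · rw [Matrix.mul_smul]
    rw [show (windmillMatrix m n)^n
        = (windmillMatrix m n)^(n-1) * windmillMatrix m n from by
      rw [← pow_succ, hn1]]
    rw [hkey, smul_smul, one_div, inv_mul_cancel₀ hm0, one_smul]
  · rw [Matrix.smul_mul, Matrix.smul_mul, Matrix.mul_smul, hkey,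
      smul_smul, smul_smul, one_div]
    congr 1
    field_simp
  · rw [Matrix.mul_smul, Matrix.smul_mul, hcomm]
end

section
/- Let M be the adjacency matrix of the oriented Dutch windmill graph D^m_n. Then rank(M) = m(n-2)+2. -/
section WindmillRankProof

open Submodule Module Matrix

/-- Standard basis vector `e_u` of `ℝ^N`. -/
def wEVec (N u : ℕ) : Fin N → ℝ := fun j => if (j : ℕ) = u then 1 else 0

/-- The vector `∑_{k=1}^m e_{k(n-1)}`. -/
def wSVec (m n : ℕ) : Fin (m*(n-1)+1) → ℝ :=
  fun j => if (j : ℕ) ≠ 0 ∧ (n-1) ∣ (j : ℕ) then 1 else 0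

lemma wIte {p q : Prop} {hp : Decidable p} {hq : Decidable q} (h : p ↔ q) :
    (if p then (1:ℝ) else 0) = if q then 1 else 0 := by
  by_cases hq : q
  · rw [if_pos (h.mpr hq), if_pos hq]
  · rw [if_neg (fun hp => hq (h.mp hp)), if_neg hq]

lemma wAddMulMod (k q t : ℕ) : (k*q + t) % q = t % q := by
  rw [Nat.mul_comm, Nat.mul_add_mod]

lemma wHelper {q k1 k2 t1 t2 : ℕ} (h1 : t1 < q) (h2 : t2 < q)
    (h : k1*q+t1 = k2*q+t2) : k1 = k2 ∧ t1 = t2 := by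
  have hq : 0 < q := lt_of_le_of_lt (Nat.zero_le _) h1
  have e1 : (k1*q+t1) % q = t1 := by rw [wAddMulMod]; exact Nat.mod_eq_of_lt h1
  have e2 : (k2*q+t2) % q = t2 := by rw [wAddMulMod]; exact Nat.mod_eq_of_lt h2
  rw [h] at e1
  have ht : t1 = t2 := by omega
  subst ht
  exact ⟨Nat.eq_of_mul_eq_mul_right hq (by omega), rfl⟩

lemma wEdge_to_one {m n a : ℕ} (hn : 3 ≤ n) :
    windmillEdge m n a 1 ↔ ∃ k, 1 ≤ k ∧ k ≤ m ∧ a = k*(n-1)+1 := by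
  constructor
  · rintro (⟨k, hk1, hkm, ha, hb⟩ | ⟨k, i, hk1, hkm, hi2, hin, ha, hb⟩ | ⟨k, hk1, hkm, ha, hb⟩)
    · omega
    · omega
    · obtain ⟨k', rfl⟩ : ∃ k', k = k'+1 := ⟨k-1, by omega⟩
      refine ⟨k'+1, by omega, hkm, ?_⟩
      have h1 : (k'+1-1)*(n-1) = k'*(n-1) := by norm_num
      have h2 : (k'+1)*(n-1) = k'*(n-1)+(n-1) := by ring
      omega
  · rintro ⟨k, hk1, hkm, ha⟩
    right; right
    obtain ⟨k', rfl⟩ : ∃ k', k = k'+1 := ⟨k-1, by omega⟩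
    refine ⟨k'+1, by omega, hkm, ?_, rfl⟩
    have h1 : (k'+1-1)*(n-1) = k'*(n-1) := by norm_num
    have h2 : (k'+1)*(n-1) = k'*(n-1)+(n-1) := by ring
    omega

lemma wEdge_to_start {m n a u : ℕ} (hn : 3 ≤ n)
    (h1 : 1 ≤ a) (ha : a ≤ m*(n-1)+1) (hu : u < m*(n-1)) (hmod : u % (n-1) = 0) :
    windmillEdge m n a (u+2) ↔ a = 1 := by
  constructor
  · rintro (⟨k, hk1, hkm, hA, hB⟩ | ⟨k, i, hk1, hkm, hi2, hin, hA, hB⟩ | ⟨k, hk1, hkm, hA, hB⟩)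
    · exact hA
    · exfalso
      obtain ⟨k', rfl⟩ : ∃ k', k = k'+1 := ⟨k-1, by omega⟩
      have hA' : (k'+1-1)*(n-1) = k'*(n-1) := by norm_num
      have hd := Nat.div_add_mod u (n-1)
      have hmc : (u/(n-1))*(n-1) = (n-1)*(u/(n-1)) := Nat.mul_comm _ _
      have heq : k'*(n-1) + (i-1) = (u/(n-1))*(n-1) + 0 := by omega
      have := (wHelper (by omega) (by omega) heq).2
      omega
    · omega
  · rintro rfl
    left
    have hd := Nat.div_add_mod u (n-1)
    have hmc : (u/(n-1))*(n-1) = (n-1)*(u/(n-1)) := Nat.mul_comm _ _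
    refine ⟨u/(n-1)+1, Nat.le_add_left 1 _, ?_, rfl, ?_⟩
    · by_contra hcm
      push_neg at hcm
      have h2 : m*(n-1) ≤ (u/(n-1))*(n-1) := Nat.mul_le_mul_right _ (by omega)
      omega
    · have h3 : (u/(n-1)+1-1)*(n-1) = (u/(n-1))*(n-1) := by norm_num
      omega

lemma wEdge_to_mid {m n a u : ℕ} (hn : 3 ≤ n)
    (h1 : 1 ≤ a) (hu : u < m*(n-1)) (hmod : u % (n-1) ≠ 0) :
    windmillEdge m n a (u+2) ↔ a = u+1 := by
  constructor
  · rintro (⟨k, hk1, hkm, hA, hB⟩ | ⟨k, i, hk1, hkm, hi2, hin, hA, hB⟩ | ⟨k, hk1, hkm, hA, hB⟩)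
    · exfalso
      obtain ⟨k', rfl⟩ : ∃ k', k = k'+1 := ⟨k-1, by omega⟩
      have hA' : (k'+1-1)*(n-1) = k'*(n-1) := by norm_num
      have hu' : u = k'*(n-1) := by omega
      have : u % (n-1) = 0 := by rw [hu']; exact Nat.mul_mod_left _ _
      omega
    · omega
    · omega
  · rintro rfl
    right; left
    have hd := Nat.div_add_mod u (n-1)
    have hmc : (u/(n-1))*(n-1) = (n-1)*(u/(n-1)) := Nat.mul_comm _ _
    have htlt : u % (n-1) < n-1 := Nat.mod_lt _ (by omega)
    have hpos : 0 < u % (n-1) := Nat.pos_of_ne_zero hmod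
    refine ⟨u/(n-1)+1, u%(n-1)+1, Nat.le_add_left 1 _, ?_, by omega, by omega, ?_, rfl⟩
    · by_contra hcm
      push_neg at hcm
      have h2 : m*(n-1) ≤ (u/(n-1))*(n-1) := Nat.mul_le_mul_right _ (by omega)
      omega
    · have h3 : (u/(n-1)+1-1)*(n-1) = (u/(n-1))*(n-1) := by norm_num
      omega

lemma wCol_spec (m n : ℕ) (hm : 1 ≤ m) (hn : 3 ≤ n) (j : Fin (m*(n-1)+1)) :
    (fun i => windmillMatrix m n i j) =
      if (j : ℕ) = 0 then wSVec m n
      else if ((j:ℕ)-1) % (n-1) = 0 then wEVec (m*(n-1)+1) 0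
      else wEVec (m*(n-1)+1) ((j:ℕ)-1) := by
  have hjlt := j.isLt
  by_cases h0 : (j:ℕ) = 0
  · rw [if_pos h0]
    funext i
    have hilt := i.isLt
    simp only [windmillMatrix, wSVec]
    have hj1 : (j:ℕ)+1 = 1 := by omega
    rw [hj1]
    apply wIte
    rw [wEdge_to_one hn]
    constructor
    · rintro ⟨k, hk1, hkm, ha⟩
      have h2 : 1*(n-1) ≤ k*(n-1) := Nat.mul_le_mul_right _ hk1
      have h3 : k*(n-1) = (n-1)*k := Nat.mul_comm _ _
      exact ⟨by omega, k, by omega⟩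
    · rintro ⟨hne, c, hc⟩
      have hc0 : c ≠ 0 := by rintro rfl; simp only [Nat.mul_zero] at hc; omega
      refine ⟨c, by omega, ?_, ?_⟩
      · by_contra hcm
        push_neg at hcm
        have h2 : (m+1)*(n-1) ≤ c*(n-1) := Nat.mul_le_mul_right _ (by omega)
        have h4 : (m+1)*(n-1) = m*(n-1)+(n-1) := by ring
        have h3 : c*(n-1) = (n-1)*c := Nat.mul_comm _ _
        omega
      · have h3 : c*(n-1) = (n-1)*c := Nat.mul_comm _ _
        omega
  · rw [if_neg h0]
    by_cases hmod : ((j:ℕ)-1) % (n-1) = 0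
    · rw [if_pos hmod]
      funext i
      have hilt := i.isLt
      simp only [windmillMatrix, wEVec]
      have hj1 : (j:ℕ)+1 = ((j:ℕ)-1)+2 := by omega
      rw [hj1]
      apply wIte
      rw [wEdge_to_start hn (by omega) (by omega) (by omega) hmod]
      omega
    · rw [if_neg hmod]
      funext i
      have hilt := i.isLt
      simp only [windmillMatrix, wEVec]
      have hj1 : (j:ℕ)+1 = ((j:ℕ)-1)+2 := by omega
      rw [hj1]
      apply wIte
      rw [wEdge_to_mid hn (by omega) (by omega) hmod]
      omega

/-- Index map for the middle basis vectors. -/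
def wIdx (n t : ℕ) : ℕ := (t-1)/(n-2)*(n-1) + (t-1)%(n-2) + 1

lemma wIdx_spec {m n t : ℕ} (hn : 3 ≤ n) (h1 : 1 ≤ t) (h2 : t ≤ m*(n-2)) :
    ∃ k r, k < m ∧ r < n-2 ∧ t = k*(n-2)+r+1 ∧ wIdx n t = k*(n-1)+r+1 := by
  have hd := Nat.div_add_mod (t-1) (n-2)
  have hmc : ((t-1)/(n-2))*(n-2) = (n-2)*((t-1)/(n-2)) := Nat.mul_comm _ _
  have hrlt : (t-1)%(n-2) < n-2 := Nat.mod_lt _ (by omega)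
  have hkm : (t-1)/(n-2) < m := by
    by_contra h
    push_neg at h
    have h2' : m*(n-2) ≤ ((t-1)/(n-2))*(n-2) := Nat.mul_le_mul_right _ h
    omega
  exact ⟨(t-1)/(n-2), (t-1)%(n-2), hkm, hrlt, by omega, rfl⟩

lemma wIdx_inv {m n u : ℕ} (hn : 3 ≤ n) (hu : u < m*(n-1)) (hmod : u % (n-1) ≠ 0) :
    ∃ t, 1 ≤ t ∧ t ≤ m*(n-2) ∧ wIdx n t = u := by
  have hd := Nat.div_add_mod u (n-1)
  have hmc : (u/(n-1))*(n-1) = (n-1)*(u/(n-1)) := Nat.mul_comm _ _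
  have hmlt : u % (n-1) < n-1 := Nat.mod_lt _ (by omega)
  have hkm : u/(n-1) < m := by
    by_contra h
    push_neg at h
    have h2 : m*(n-1) ≤ (u/(n-1))*(n-1) := Nat.mul_le_mul_right _ h
    omega
  set k := u/(n-1) with hk
  set r := u%(n-1) - 1 with hr
  refine ⟨k*(n-2)+r+1, Nat.le_add_left 1 _, ?_, ?_⟩
  · have h2 : (k+1)*(n-2) ≤ m*(n-2) := Nat.mul_le_mul_right _ (by omega)
    have h3 : (k+1)*(n-2) = k*(n-2)+(n-2) := by ring
    omega
  · unfold wIdx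
    have e1 : k*(n-2)+r+1-1 = k*(n-2)+r := by omega
    rw [e1]
    have e2 : (k*(n-2)+r) % (n-2) = r := by
      rw [wAddMulMod]; exact Nat.mod_eq_of_lt (by omega)
    have e3 : (k*(n-2)+r) / (n-2) = k := by
      rw [Nat.mul_comm k (n-2), Nat.mul_add_div (by omega)]
      rw [Nat.div_eq_of_lt (by omega), Nat.add_zero]
    rw [e2, e3]
    omega

/-- The candidate basis family of the column space. -/
def wFam (m n : ℕ) : Fin (m*(n-2)+2) → (Fin (m*(n-1)+1) → ℝ) :=
  fun t => if (t:ℕ) = 0 then wEVec (m*(n-1)+1) 0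
    else if (t:ℕ) ≤ m*(n-2) then wEVec (m*(n-1)+1) (wIdx n (t:ℕ))
    else wSVec m n

lemma wFam_eq_zero {m n : ℕ} (t : Fin (m*(n-2)+2)) (h : (t:ℕ) = 0) :
    wFam m n t = wEVec (m*(n-1)+1) 0 := by unfold wFam; rw [if_pos h]

lemma wFam_eq_mid {m n : ℕ} (t : Fin (m*(n-2)+2)) (h1 : (t:ℕ) ≠ 0) (h2 : (t:ℕ) ≤ m*(n-2)) :
    wFam m n t = wEVec (m*(n-1)+1) (wIdx n (t:ℕ)) := by
  unfold wFam; rw [if_neg h1, if_pos h2]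

lemma wFam_eq_last {m n : ℕ} (t : Fin (m*(n-2)+2)) (h2 : m*(n-2) < (t:ℕ)) :
    wFam m n t = wSVec m n := by
  unfold wFam; rw [if_neg (by omega), if_neg (by omega)]

lemma wMidMod {n k r : ℕ} (hn : 3 ≤ n) (hr : r < n-2) : (k*(n-1)+r+1) % (n-1) = r+1 := by
  have h1 : k*(n-1)+r+1 = k*(n-1)+(r+1) := by omega
  rw [h1, wAddMulMod]
  exact Nat.mod_eq_of_lt (by omega)

lemma wMidInj {n k r k' r' : ℕ} (hn : 3 ≤ n) (hr : r < n-2) (hr' : r' < n-2)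
    (h : k*(n-1)+r+1 = k'*(n-1)+r'+1) : k = k' ∧ r = r' := by
  have := wHelper (q := n-1) (k1 := k) (k2 := k') (t1 := r+1) (t2 := r'+1)
    (by omega) (by omega) (by omega)
  omega

lemma wTInj {n k r k' r' : ℕ} (hn : 3 ≤ n) (hr : r < n-2) (hr' : r' < n-2)
    (h : k*(n-2)+r+1 = k'*(n-2)+r'+1) : k = k' ∧ r = r' := by
  have := wHelper (q := n-2) (k1 := k) (k2 := k') (t1 := r) (t2 := r')
    (by omega) (by omega) (by omega)
  omega

lemma wFam_coord (m n : ℕ) (hm : 1 ≤ m) (hn : 3 ≤ n) (t : Fin (m*(n-2)+2)) :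
    ∃ c : Fin (m*(n-1)+1), ∀ t' : Fin (m*(n-2)+2),
      wFam m n t' c = if t' = t then 1 else 0 := by
  have hnn : 1*(n-1) ≤ m*(n-1) := Nat.mul_le_mul_right _ hm
  have htlt := t.isLt
  -- helper for evaluating at a given coordinate
  by_cases h0 : (t:ℕ) = 0
  · refine ⟨⟨0, by omega⟩, ?_⟩
    intro t'
    have ht'lt := t'.isLt
    by_cases h0' : (t':ℕ) = 0
    · rw [wFam_eq_zero t' h0']
      show (if (0:ℕ) = 0 then (1:ℝ) else 0) = _
      apply wIte
      rw [Fin.ext_iff]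
      omega
    · by_cases h2' : (t':ℕ) ≤ m*(n-2)
      · rw [wFam_eq_mid t' h0' h2']
        obtain ⟨k', r', hk', hr', ht', hidx'⟩ := wIdx_spec (m := m) hn (by omega) h2'
        show (if (0:ℕ) = wIdx n (t':ℕ) then (1:ℝ) else 0) = _
        apply wIte
        rw [Fin.ext_iff, hidx']
        omega
      · rw [wFam_eq_last t' (by omega)]
        show (if (0:ℕ) ≠ 0 ∧ (n-1) ∣ (0:ℕ) then (1:ℝ) else 0) = _
        apply wIte
        rw [Fin.ext_iff]
        constructor
        · rintro ⟨h, -⟩; omega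
        · omega
  · by_cases h2 : (t:ℕ) ≤ m*(n-2)
    · obtain ⟨k, r, hk, hr, ht, hidx⟩ := wIdx_spec (m := m) hn (by omega) h2
      have hvlt : k*(n-1)+r+1 < m*(n-1)+1 := by
        have h2' : (k+1)*(n-1) ≤ m*(n-1) := Nat.mul_le_mul_right _ (by omega)
        have h3 : (k+1)*(n-1) = k*(n-1)+(n-1) := by ring
        omega
      refine ⟨⟨k*(n-1)+r+1, hvlt⟩, ?_⟩
      intro t'
      have ht'lt := t'.isLt
      by_cases h0' : (t':ℕ) = 0
      · rw [wFam_eq_zero t' h0']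
        show (if k*(n-1)+r+1 = 0 then (1:ℝ) else 0) = _
        apply wIte
        rw [Fin.ext_iff]
        omega
      · by_cases h2' : (t':ℕ) ≤ m*(n-2)
        · rw [wFam_eq_mid t' h0' h2']
          obtain ⟨k', r', hk', hr', ht', hidx'⟩ := wIdx_spec (m := m) hn (by omega) h2'
          show (if k*(n-1)+r+1 = wIdx n (t':ℕ) then (1:ℝ) else 0) = _
          apply wIte
          rw [Fin.ext_iff, hidx']
          constructor
          · intro h
            obtain ⟨rfl, rfl⟩ := wMidInj hn hr hr' h
            omega
          · intro h
            obtain ⟨rfl, rfl⟩ := wTInj (n := n) (k := k') (r := r') (k' := k) (r' := r)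
              hn hr' hr (show k'*(n-2)+r'+1 = k*(n-2)+r+1 by omega)
            omega
        · rw [wFam_eq_last t' (by omega)]
          show (if k*(n-1)+r+1 ≠ 0 ∧ (n-1) ∣ k*(n-1)+r+1 then (1:ℝ) else 0) = _
          apply wIte
          rw [Fin.ext_iff]
          constructor
          · rintro ⟨-, hdvd⟩
            exfalso
            have hmod := wMidMod (k := k) hn hr
            obtain ⟨c, hcq⟩ := hdvd
            rw [hcq, Nat.mul_mod_right] at hmod
            omega
          · omega
    · refine ⟨⟨n-1, by omega⟩, ?_⟩
      intro t'
      have ht'lt := t'.isLt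
      by_cases h0' : (t':ℕ) = 0
      · rw [wFam_eq_zero t' h0']
        show (if n-1 = 0 then (1:ℝ) else 0) = _
        apply wIte
        rw [Fin.ext_iff]
        omega
      · by_cases h2' : (t':ℕ) ≤ m*(n-2)
        · rw [wFam_eq_mid t' h0' h2']
          obtain ⟨k', r', hk', hr', ht', hidx'⟩ := wIdx_spec (m := m) hn (by omega) h2'
          show (if n-1 = wIdx n (t':ℕ) then (1:ℝ) else 0) = _
          apply wIte
          rw [Fin.ext_iff, hidx']
          constructor
          · intro h
            exfalso
            rcases Nat.eq_zero_or_pos k' with rfl | hk'pos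
            · simp only [Nat.zero_mul] at h; omega
            · have : 1*(n-1) ≤ k'*(n-1) := Nat.mul_le_mul_right _ hk'pos
              omega
          · omega
        · rw [wFam_eq_last t' (by omega)]
          show (if n-1 ≠ 0 ∧ (n-1) ∣ n-1 then (1:ℝ) else 0) = _
          apply wIte
          rw [Fin.ext_iff]
          constructor
          · intro; omega
          · intro; exact ⟨by omega, dvd_refl _⟩

lemma wFam_li (m n : ℕ) (hm : 1 ≤ m) (hn : 3 ≤ n) :
    LinearIndependent ℝ (wFam m n) := by
  rw [Fintype.linearIndependent_iff]
  intro g hg t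
  obtain ⟨c, hc⟩ := wFam_coord m n hm hn t
  have h := congrFun hg c
  rw [Finset.sum_apply] at h
  simp only [Pi.smul_apply, smul_eq_mul, hc, mul_ite, mul_one, mul_zero, Pi.zero_apply] at h
  rwa [Finset.sum_ite_eq' Finset.univ t g, if_pos (Finset.mem_univ t)] at h

lemma wRange_eq (m n : ℕ) (hm : 1 ≤ m) (hn : 3 ≤ n) :
    Set.range (windmillMatrix m n)ᵀ = Set.range (wFam m n) := by
  have hnn : 1*(n-1) ≤ m*(n-1) := Nat.mul_le_mul_right _ hm
  apply Set.Subset.antisymm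
  · rintro _ ⟨j, rfl⟩
    have hjlt := j.isLt
    have hc : (windmillMatrix m n)ᵀ j = fun i => windmillMatrix m n i j := rfl
    rw [hc, wCol_spec m n hm hn j]
    by_cases h0 : (j:ℕ) = 0
    · rw [if_pos h0]
      exact ⟨⟨m*(n-2)+1, by omega⟩, wFam_eq_last _ (Nat.lt_succ_self _)⟩
    · rw [if_neg h0]
      by_cases hmod : ((j:ℕ)-1) % (n-1) = 0
      · rw [if_pos hmod]
        exact ⟨⟨0, by omega⟩, wFam_eq_zero _ rfl⟩
      · rw [if_neg hmod]
        obtain ⟨tt, ht1, ht2, hidx⟩ := wIdx_inv (m := m) hn (by omega) hmod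
        have httlt : tt < m*(n-2)+2 := by omega
        refine ⟨⟨tt, httlt⟩, ?_⟩
        rw [wFam_eq_mid ⟨tt, httlt⟩ (show tt ≠ 0 by omega) ht2]
        show wEVec (m*(n-1)+1) (wIdx n tt) = _
        rw [hidx]
  · rintro _ ⟨t, rfl⟩
    have htlt := t.isLt
    by_cases h0 : (t:ℕ) = 0
    · rw [wFam_eq_zero t h0]
      have h1lt : (1:ℕ) < m*(n-1)+1 := by omega
      refine ⟨⟨1, h1lt⟩, ?_⟩
      have hc : (windmillMatrix m n)ᵀ ⟨1, h1lt⟩ = fun i => windmillMatrix m n i ⟨1, h1lt⟩ := rfl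
      rw [hc, wCol_spec m n hm hn ⟨1, h1lt⟩]
      rw [if_neg (show ¬((1:ℕ) = 0) by omega), if_pos (show ((1:ℕ)-1) % (n-1) = 0 by simp)]
    · by_cases h2 : (t:ℕ) ≤ m*(n-2)
      · rw [wFam_eq_mid t h0 h2]
        obtain ⟨k, r, hk, hr, ht, hidx⟩ := wIdx_spec (m := m) hn (by omega) h2
        have hvlt : k*(n-1)+r+1+1 < m*(n-1)+1 := by
          have h2' : (k+1)*(n-1) ≤ m*(n-1) := Nat.mul_le_mul_right _ (by omega)
          have h3 : (k+1)*(n-1) = k*(n-1)+(n-1) := by ring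
          omega
        refine ⟨⟨k*(n-1)+r+1+1, hvlt⟩, ?_⟩
        have hc : (windmillMatrix m n)ᵀ ⟨k*(n-1)+r+1+1, hvlt⟩
            = fun i => windmillMatrix m n i ⟨k*(n-1)+r+1+1, hvlt⟩ := rfl
        rw [hc, wCol_spec m n hm hn ⟨k*(n-1)+r+1+1, hvlt⟩]
        have hmod := wMidMod (k := k) hn hr
        rw [if_neg (show ¬(k*(n-1)+r+1+1 = 0) by omega),
          if_neg (show ¬((k*(n-1)+r+1+1-1) % (n-1) = 0) by
            rw [show k*(n-1)+r+1+1-1 = k*(n-1)+r+1 from rfl, hmod]; omega)]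
        rw [hidx]
        show wEVec (m*(n-1)+1) (k*(n-1)+r+1+1-1) = wEVec (m*(n-1)+1) (k*(n-1)+r+1)
        rfl
      · rw [wFam_eq_last t (by omega)]
        refine ⟨⟨0, by omega⟩, ?_⟩
        have hc : (windmillMatrix m n)ᵀ ⟨0, by omega⟩
            = fun i => windmillMatrix m n i ⟨0, by omega⟩ := rfl
        rw [hc, wCol_spec m n hm hn ⟨0, by omega⟩]
        rw [if_pos rfl]

end WindmillRankProof

theorem windmillMatrix_rank (m n : ℕ) (hm : 1 ≤ m) (hn : 3 ≤ n) :
    (windmillMatrix m n).rank = m*(n-2)+2 := by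
  rw [Matrix.rank_eq_finrank_span_cols,
    show Set.range (windmillMatrix m n).col = Set.range (Matrix.transpose (windmillMatrix m n)) from rfl, wRange_eq m n hm hn,
    finrank_span_eq_card (wFam_li m n hm hn)]
  simp
end

section
/- Let M be the adjacency matrix of the oriented Dutch windmill graph D^m_n. Then M is invertible if and only if m = 1, and in that case M⁻¹ = Mᵀ. -/
lemma edge_one (n a b : ℕ) (hn : 3 ≤ n) :
    windmillEdge 1 n a b ↔ ((a = n ∧ b = 1) ∨ (1 ≤ a ∧ a < n ∧ b = a + 1)) := by
  unfold windmillEdge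
  constructor
  · rintro (⟨k,hk1,hk2,ha,hb⟩|⟨k,i,hk1,hk2,hi1,hi2,ha,hb⟩|⟨k,hk1,hk2,ha,hb⟩) <;>
    · have hk : k = 1 := by omega
      subst hk
      simp only [Nat.sub_self, Nat.zero_mul, Nat.zero_add] at ha hb ⊢
      omega
  · rintro (⟨ha,hb⟩|⟨h1,h2,hb⟩)
    · exact Or.inr (Or.inr ⟨1, le_refl 1, le_refl 1, by omega, hb⟩)
    · rcases eq_or_lt_of_le h1 with h|h
      · exact Or.inl ⟨1, le_refl 1, le_refl 1, h.symm, by omega⟩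
      · exact Or.inr (Or.inl ⟨1, a, le_refl 1, le_refl 1, by omega, by omega, by omega, hb⟩)

lemma edge_from_hub (m n k a b : ℕ) (hn : 3 ≤ n) (hk1 : 1 ≤ k) (hk2 : k ≤ m)
    (ha : a = k*(n-1)+1) : windmillEdge m n a b ↔ b = 1 := by
  constructor
  · rintro (⟨k',hk1',hk2',ha',hb'⟩|⟨k',i,hk1',hk2',hi1,hi2,ha',hb'⟩|⟨k',hk1',hk2',ha',hb'⟩)
    · exfalso
      have : k * (n-1) = 0 := by omega
      rcases Nat.mul_eq_zero.mp this with h|h <;> omega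
    · exfalso
      subst ha
      rcases Nat.lt_or_ge (k'-1) k with h|h
      · have h' : k' - 1 + 1 ≤ k := h
        have := Nat.mul_le_mul_right (n-1) h'
        rw [Nat.succ_mul] at this
        omega
      · have := Nat.mul_le_mul_right (n-1) h
        omega
    · exact hb'
  · intro hb
    refine Or.inr (Or.inr ⟨k, hk1, hk2, ?_, hb⟩)
    have h' : k - 1 + 1 = k := by omega
    have : (k-1+1)*(n-1) = (k-1)*(n-1) + (n-1) := Nat.succ_mul _ _
    rw [h'] at this
    omega

def sigma1 (n : ℕ) (hn : 3 ≤ n) (i : Fin (1*(n-1)+1)) : Fin (1*(n-1)+1) :=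
  ⟨if (i:ℕ)+1 = n then 0 else (i:ℕ)+1, by
    have := i.isLt; split_ifs <;> omega⟩

lemma sigma1_val (n : ℕ) (hn : 3 ≤ n) (i : Fin (1*(n-1)+1)) :
    (sigma1 n hn i : ℕ) = if (i:ℕ)+1 = n then 0 else (i:ℕ)+1 := rfl

lemma sigma1_inj (n : ℕ) (hn : 3 ≤ n) : Function.Injective (sigma1 n hn) := by
  intro i j h
  have h' := congrArg Fin.val h
  rw [sigma1_val, sigma1_val] at h'
  have hi := i.isLt; have hj := j.isLt
  apply Fin.ext
  split_ifs at h' <;> omega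

lemma windmill_one_apply (n : ℕ) (hn : 3 ≤ n) (i j : Fin (1*(n-1)+1)) :
    windmillMatrix 1 n i j = if j = sigma1 n hn i then 1 else 0 := by
  have hi := i.isLt; have hj := j.isLt
  simp only [windmillMatrix]
  by_cases hcond : windmillEdge 1 n ((i:ℕ)+1) ((j:ℕ)+1)
  · rw [if_pos hcond, if_pos]
    rw [edge_one n _ _ hn] at hcond
    apply Fin.ext
    rw [sigma1_val]
    split_ifs <;> omega
  · rw [if_neg hcond, if_neg]
    intro hj'
    apply hcond
    rw [edge_one n _ _ hn]
    have h' := congrArg Fin.val hj'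
    rw [sigma1_val] at h'
    split_ifs at h' <;> omega

lemma windmill_one_mul_transpose (n : ℕ) (hn : 3 ≤ n) :
    windmillMatrix 1 n * (windmillMatrix 1 n).transpose = 1 := by
  ext i j
  rw [Matrix.mul_apply]
  rw [Finset.sum_eq_single (sigma1 n hn i)]
  · rw [Matrix.transpose_apply, windmill_one_apply n hn, windmill_one_apply n hn,
      if_pos rfl, one_mul]
    by_cases h : i = j
    · subst h
      rw [if_pos rfl, Matrix.one_apply_eq]
    · rw [if_neg (fun hc => h (sigma1_inj n hn hc)), Matrix.one_apply_ne h]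
  · intro k _ hk
    rw [windmill_one_apply n hn, if_neg hk, zero_mul]
  · intro h
    exact absurd (Finset.mem_univ _) h

theorem windmillMatrix_invertible_iff (m n : ℕ) (hm : 1 ≤ m) (hn : 3 ≤ n) :
    (IsUnit (windmillMatrix m n) ↔ m = 1) ∧
    (m = 1 → (windmillMatrix m n)⁻¹ = (windmillMatrix m n).transpose) := by
  constructor
  · constructor
    · intro hU
      by_contra hm1
      have hm2 : 2 ≤ m := by omega
      have h1 : n - 1 < m*(n-1)+1 := by
        have := Nat.mul_le_mul_right (n-1) hm
        omega
      have h2 : 2*(n-1) < m*(n-1)+1 := by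
        have := Nat.mul_le_mul_right (n-1) hm2
        omega
      set i1 : Fin (m*(n-1)+1) := ⟨n-1, h1⟩ with hi1
      set i2 : Fin (m*(n-1)+1) := ⟨2*(n-1), h2⟩ with hi2
      have e1 := fun b => edge_from_hub m n 1 ((i1:ℕ)+1) b hn (le_refl 1) hm (by show n-1+1 = 1*(n-1)+1; omega)
      have e2 := fun b => edge_from_hub m n 2 ((i2:ℕ)+1) b hn (by omega) hm2 rfl
      have hrow : windmillMatrix m n i1 = windmillMatrix m n i2 := by
        funext j
        simp only [windmillMatrix, e1, e2]
      have hdet : (windmillMatrix m n).det = 0 :=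
        Matrix.det_zero_of_row_eq (by
          intro hc
          have := congrArg Fin.val hc
          simp [hi1, hi2] at this
          omega) hrow
      rw [Matrix.isUnit_iff_isUnit_det, hdet] at hU
      simp at hU
    · intro hm1
      subst hm1
      rw [Matrix.isUnit_iff_isUnit_det]
      have := congrArg Matrix.det (windmill_one_mul_transpose n hn)
      rw [Matrix.det_mul, Matrix.det_one] at this
      exact IsUnit.of_mul_eq_one _ this
  · intro hm1
    subst hm1
    exact Matrix.inv_eq_right_inv (windmill_one_mul_transpose n hn)
end

section
/- Let M be the adjacency matrix of the oriented Dutch windmill graph D^m_n with m ≥ 2 and n ≥ 3. Then the (i,j)-entry of M^(n-1) equals 1 exactly at positions: (i) i=1, j=(k-1)(n-1)+n for some k in {1,...,m}; (ii) i=(k-1)(n-1)+2, j=1 for some k; (iii) i=(k-1)(n-1)+ℓ, j=i-1 for some k and ℓ in {3,...,n}; (iv) i=(k-1)(n-1)+ℓ, j=(r-1)(n-1)+(ℓ-1) for distinct k,r and ℓ in {3,...,n}; and equals 0 at all other positions. -/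
/-- Claimed description of the entries of `M^r` for `1 ≤ r ≤ N` (`N = n-1`),
with zero-based blade index `k < m`. -/
def WP (m N r a b : ℕ) : Prop :=
  (a = 1 ∧ ∃ k, k < m ∧ b = k * N + (r + 1)) ∨
  (∃ k i, k < m ∧ 2 ≤ i ∧ i + r ≤ N + 1 ∧ a = k * N + i ∧ b = k * N + (i + r)) ∨
  (∃ k, k < m ∧ a = k * N + (N + 2 - r) ∧ b = 1) ∨
  (∃ k s i, k < m ∧ s < m ∧ i ≤ N + 1 ∧ N + 3 ≤ r + i ∧
    a = k * N + i ∧ b = s * N + (r + i - (N + 1)))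

lemma mul_bound' {k m N : ℕ} (h : k < m) : k * N + N ≤ m * N := by
  have h1 : (k + 1) * N ≤ m * N := Nat.mul_le_mul h (Nat.le_refl N)
  rwa [Nat.succ_mul] at h1

lemma blade_inj {N k k' i i' : ℕ} (hi : 2 ≤ i) (hiN : i ≤ N + 1)
    (hi' : 2 ≤ i') (hi'N : i' ≤ N + 1) (h : k * N + i = k' * N + i') :
    k = k' ∧ i = i' := by
  rcases Nat.lt_trichotomy k k' with hlt | he | hgt
  · have := mul_bound' (N := N) (m := k') hlt; omega
  · subst he; omega
  · have := mul_bound' (N := N) (m := k) hgt; omega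

lemma WP_bounds {m N r a b : ℕ} (hm : 1 ≤ m) (hr : 1 ≤ r) (hrN : r ≤ N)
    (h : WP m N r a b) : 1 ≤ b ∧ b ≤ m * N + 1 := by
  have key : ∀ k c : ℕ, k < m → c ≤ N + 1 → k * N + c ≤ m * N + 1 := by
    intro k c hk hc
    have h1 := mul_bound' (N := N) hk
    omega
  rcases h with ⟨_, k, hk, hb⟩ | ⟨k, i, hk, hi2, hiN, _, hb⟩ | ⟨k, _, _, hb⟩ |
    ⟨k, s, i, hk, hs, hiN, hri, _, hb⟩
  · have := key k (r+1) hk (by omega); omega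
  · have := key k (i+r) hk (by omega); omega
  · omega
  · have := key s (r+i-(N+1)) hs (by omega); omega

lemma WP_compose {m N r a b c : ℕ} (hr : 1 ≤ r) (hrN : r + 1 ≤ N)
    (hab : WP m N r a b) (hbc : WP m N 1 b c) : WP m N (r + 1) a c := by
  rcases hab with ⟨ha, k, hk, hb⟩ | ⟨k, i, hk, hi2, hiN, ha, hb⟩ | ⟨k, hk, ha, hb⟩ |
    ⟨k, s, i, hk, hs, hiN, hri, ha, hb⟩ <;>
  rcases hbc with ⟨hb', s', hs', hc⟩ | ⟨k', i', hk', hi2', hiN', hb', hc⟩ |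
    ⟨k', hk', hb', hc⟩ | ⟨k', s', i', hk', hs', hiN', hri', hb', hc⟩
  -- case1 × E1
  · omega
  -- case1 × E2
  · obtain ⟨rfl, rfl⟩ := blade_inj (by omega) (by omega) hi2' (by omega)
      (show k * N + (r+1) = k' * N + i' by omega)
    exact Or.inl ⟨ha, k, hk, by omega⟩
  -- case1 × E3
  · obtain ⟨rfl, h2⟩ := blade_inj (by omega) (by omega) (by omega) (by omega)
      (show k * N + (r+1) = k' * N + (N + 2 - 1) by omega)
    omega
  -- case1 × E4 (vacuous)
  · omega
  -- case2 × E1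
  · omega
  -- case2 × E2
  · obtain ⟨rfl, rfl⟩ := blade_inj (by omega) (by omega) hi2' (by omega)
      (show k * N + (i+r) = k' * N + i' by omega)
    exact Or.inr (Or.inl ⟨k, i, hk, hi2, by omega, ha, by omega⟩)
  -- case2 × E3
  · obtain ⟨rfl, h2⟩ := blade_inj (by omega) (by omega) (by omega) (by omega)
      (show k * N + (i+r) = k' * N + (N + 2 - 1) by omega)
    exact Or.inr (Or.inr (Or.inl ⟨k, hk, by omega, hc⟩))
  -- case2 × E4
  · omega
  -- case3 × E1
  · exact Or.inr (Or.inr (Or.inr ⟨k, s', N + 2 - r, hk, hs', by omega, by omega, ha, by omega⟩))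
  -- case3 × E2
  · omega
  -- case3 × E3
  · omega
  -- case3 × E4
  · omega
  -- case4 × E1
  · omega
  -- case4 × E2
  · obtain ⟨rfl, rfl⟩ := blade_inj (by omega) (by omega) hi2' (by omega)
      (show s * N + (r + i - (N+1)) = k' * N + i' by omega)
    exact Or.inr (Or.inr (Or.inr ⟨k, s, i, hk, hs, hiN, by omega, ha, by omega⟩))
  -- case4 × E3
  · obtain ⟨rfl, h2⟩ := blade_inj (by omega) (by omega) (by omega) (by omega)
      (show s * N + (r + i - (N+1)) = k' * N + (N + 2 - 1) by omega)
    omega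
  -- case4 × E4
  · omega

lemma WP_decompose {m N r a c : ℕ} (hr : 1 ≤ r) (hrN : r + 1 ≤ N)
    (h : WP m N (r + 1) a c) : ∃ b, WP m N r a b ∧ WP m N 1 b c := by
  rcases h with ⟨ha, k, hk, hc⟩ | ⟨k, i, hk, hi2, hiN, ha, hc⟩ | ⟨k, hk, ha, hc⟩ |
    ⟨k, s, i, hk, hs, hiN, hri, ha, hc⟩
  · exact ⟨k * N + (r+1), Or.inl ⟨ha, k, hk, rfl⟩,
      Or.inr (Or.inl ⟨k, r+1, hk, by omega, by omega, rfl, by omega⟩)⟩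
  · exact ⟨k * N + (i+r), Or.inr (Or.inl ⟨k, i, hk, hi2, by omega, ha, rfl⟩),
      Or.inr (Or.inl ⟨k, i+r, hk, by omega, by omega, rfl, by omega⟩)⟩
  · exact ⟨k * N + (N+1), Or.inr (Or.inl ⟨k, N+1-r, hk, by omega, by omega, by omega, by omega⟩),
      Or.inr (Or.inr (Or.inl ⟨k, hk, by omega, hc⟩))⟩
  · by_cases h2 : N + 3 ≤ r + i
    · exact ⟨s * N + (r + i - (N+1)),
        Or.inr (Or.inr (Or.inr ⟨k, s, i, hk, hs, hiN, h2, ha, rfl⟩)),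
        Or.inr (Or.inl ⟨s, r + i - (N+1), hs, by omega, by omega, rfl, by omega⟩)⟩
    · exact ⟨1, Or.inr (Or.inr (Or.inl ⟨k, hk, by omega, rfl⟩)),
        Or.inl ⟨rfl, s, hs, by omega⟩⟩

lemma WP_reach_top {m N r a b k : ℕ} (hr : 1 ≤ r) (hrN : r + 1 ≤ N)
    (h : WP m N r a b) (hb : b = k * N + (N + 1)) : a = k * N + (N + 1 - r) := by
  rcases h with ⟨ha, k0, hk0, hb0⟩ | ⟨k0, i0, hk0, hi2, hiN, ha, hb0⟩ | ⟨k0, hk0, ha, hb0⟩ |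
    ⟨k0, s0, i0, hk0, hs0, hiN, hri, ha, hb0⟩
  · obtain ⟨_, h2⟩ := blade_inj (by omega) (by omega) (by omega) (by omega)
      (show k0 * N + (r+1) = k * N + (N+1) by omega)
    omega
  · obtain ⟨rfl, h2⟩ := blade_inj (by omega) (by omega) (by omega) (by omega)
      (show k0 * N + (i0+r) = k * N + (N+1) by omega)
    omega
  · omega
  · obtain ⟨_, h2⟩ := blade_inj (show 2 ≤ r + i0 - (N+1) by omega) (by omega)
      (by omega) (by omega)
      (show s0 * N + (r + i0 - (N+1)) = k * N + (N+1) by omega)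
    omega

lemma WP_unique {m N r a b b' c : ℕ} (hr : 1 ≤ r) (hrN : r + 1 ≤ N)
    (h1 : WP m N r a b) (h2 : WP m N 1 b c)
    (h1' : WP m N r a b') (h2' : WP m N 1 b' c) : b = b' := by
  rcases h2 with ⟨hb1, s, hs, hc⟩ | ⟨k, i, hk, hi2, hiN, hb1, hc⟩ |
    ⟨k, hk, hb1, hc⟩ | ⟨k, s, i, hk, hs, hiN, hri, hb1, hc⟩ <;>
  rcases h2' with ⟨hb1', s', hs', hc'⟩ | ⟨k', i', hk', hi2', hiN', hb1', hc'⟩ |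
    ⟨k', hk', hb1', hc'⟩ | ⟨k', s', i', hk', hs', hiN', hri', hb1', hc'⟩
  -- E1 E1
  · omega
  -- E1 E2 : c = s*N+2 = k'*N+(i'+1), i' ≥ 2 : contradiction
  · obtain ⟨rfl, h3⟩ := blade_inj (by omega) (by omega) (by omega) (by omega)
      (show s * N + 2 = k' * N + (i'+1) by omega)
    omega
  -- E1 E3 : c = s*N+2 and c = 1
  · omega
  · omega
  -- E2 E1
  · obtain ⟨rfl, h3⟩ := blade_inj (by omega) (by omega) (by omega) (by omega)
      (show k * N + (i+1) = s' * N + 2 by omega)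
    omega
  -- E2 E2
  · obtain ⟨rfl, h3⟩ := blade_inj (by omega) (by omega) (by omega) (by omega)
      (show k * N + (i+1) = k' * N + (i'+1) by omega)
    omega
  -- E2 E3 : c = 1 vs c = k*N+(i+1)
  · omega
  · omega
  -- E3 E1 : c = 1 vs c = s'*N+2
  · omega
  -- E3 E2
  · omega
  -- E3 E3
  · have ha := WP_reach_top hr hrN h1 (by omega : b = k * N + (N+1))
    have ha' := WP_reach_top hr hrN h1' (by omega : b' = k' * N + (N+1))
    obtain ⟨rfl, _⟩ := blade_inj (by omega) (by omega) (by omega) (by omega)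
      (show k * N + (N+1-r) = k' * N + (N+1-r) by omega)
    omega
  · omega
  · omega
  · omega
  · omega
  · omega

lemma edge_iff {m n a b : ℕ} (hn : 3 ≤ n) :
    windmillEdge m n a b ↔ WP m (n-1) 1 a b := by
  constructor
  · rintro (⟨k, hk1, hkm, ha, hb⟩ | ⟨k, i, hk1, hkm, hi2, hin, ha, hb⟩ | ⟨k, hk1, hkm, ha, hb⟩)
    · exact Or.inl ⟨ha, k-1, by omega, by omega⟩
    · exact Or.inr (Or.inl ⟨k-1, i, by omega, hi2, by omega, ha, by omega⟩)
    · exact Or.inr (Or.inr (Or.inl ⟨k-1, by omega, by omega, hb⟩))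
  · rintro (⟨ha, k, hkm, hb⟩ | ⟨k, i, hkm, hi2, hiN, ha, hb⟩ | ⟨k, hkm, ha, hb⟩ |
      ⟨k, s, i, hkm, hsm, hiN, hri, ha, hb⟩)
    · refine Or.inl ⟨k+1, by omega, by omega, ha, ?_⟩
      simp only [Nat.add_sub_cancel]; omega
    · refine Or.inr (Or.inl ⟨k+1, i, by omega, by omega, hi2, by omega, ?_, by omega⟩)
      simp only [Nat.add_sub_cancel]; exact ha
    · refine Or.inr (Or.inr ⟨k+1, by omega, by omega, ?_, hb⟩)
      simp only [Nat.add_sub_cancel]; omega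
    · omega

open Classical in
noncomputable def WA (m n r : ℕ) : Matrix (Fin (m*(n-1)+1)) (Fin (m*(n-1)+1)) ℝ :=
  fun i j => if WP m (n-1) r ((i : ℕ)+1) ((j : ℕ)+1) then 1 else 0

lemma base_matrix {m n : ℕ} (hn : 3 ≤ n) : windmillMatrix m n = WA m n 1 := by
  classical
  ext i j
  simp only [windmillMatrix, WA]
  exact if_congr (edge_iff hn) rfl rfl

lemma step_matrix {m n r : ℕ} (hm : 2 ≤ m) (hn : 3 ≤ n) (hr : 1 ≤ r)
    (hrN : r + 1 ≤ n - 1) : WA m n r * WA m n 1 = WA m n (r + 1) := by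
  ext u v
  rw [Matrix.mul_apply]
  by_cases h : WP m (n-1) (r+1) ((u:ℕ)+1) ((v:ℕ)+1)
  · obtain ⟨b, hPb, hEb⟩ := WP_decompose hr hrN h
    have hbb := WP_bounds (m := m) (by omega) hr (by omega) hPb
    have hb1 : b - 1 < m * (n-1) + 1 := by omega
    set w0 : Fin (m*(n-1)+1) := ⟨b - 1, hb1⟩ with hw0
    have hw0b : ((w0 : ℕ)) + 1 = b := by simp only [hw0]; omega
    have hrhs : WA m n (r+1) u v = 1 := by simp only [WA]; rw [if_pos h]
    rw [hrhs, Finset.sum_eq_single w0]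
    · simp only [WA]; rw [hw0b, if_pos hPb, if_pos hEb]; norm_num
    · intro w _ hw
      simp only [WA]
      by_cases hP : WP m (n-1) r ((u:ℕ)+1) ((w:ℕ)+1)
      · by_cases hE : WP m (n-1) 1 ((w:ℕ)+1) ((v:ℕ)+1)
        · have h5 : ((w : ℕ)) + 1 = b := WP_unique hr hrN hP hE hPb hEb
          have : w = w0 := Fin.ext (by omega)
          exact absurd this hw
        · rw [if_neg hE, mul_zero]
      · rw [if_neg hP, zero_mul]
    · intro hmem; exact absurd (Finset.mem_univ w0) hmem
  · have hrhs : WA m n (r+1) u v = 0 := by simp only [WA]; rw [if_neg h]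
    rw [hrhs]
    apply Finset.sum_eq_zero
    intro w _
    simp only [WA]
    by_cases hP : WP m (n-1) r ((u:ℕ)+1) ((w:ℕ)+1)
    · by_cases hE : WP m (n-1) 1 ((w:ℕ)+1) ((v:ℕ)+1)
      · exact absurd (WP_compose hr hrN hP hE) h
      · rw [if_neg hE, mul_zero]
    · rw [if_neg hP, zero_mul]

lemma pow_eq_WA {m n : ℕ} (hm : 2 ≤ m) (hn : 3 ≤ n) :
    ∀ r, 1 ≤ r → r ≤ n - 1 → (windmillMatrix m n)^r = WA m n r := by
  intro r
  induction r with
  | zero => omega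
  | succ s ih =>
    intro _ hrN
    rcases Nat.eq_zero_or_pos s with rfl | hs
    · rw [pow_succ, pow_zero, one_mul]
      exact base_matrix hn
    · rw [pow_succ, ih hs (by omega), base_matrix hn]
      exact step_matrix hm hn hs hrN

lemma final_iff {m n a b : ℕ} (hn : 3 ≤ n) :
    WP m (n-1) (n-1) a b ↔
      ((∃ k, 1 ≤ k ∧ k ≤ m ∧ a = 1 ∧ b = (k-1)*(n-1)+n) ∨
       (∃ k, 1 ≤ k ∧ k ≤ m ∧ a = (k-1)*(n-1)+2 ∧ b = 1) ∨
       (∃ k ℓ, 1 ≤ k ∧ k ≤ m ∧ 3 ≤ ℓ ∧ ℓ ≤ n ∧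
          a = (k-1)*(n-1)+ℓ ∧ b = a - 1) ∨
       (∃ k r ℓ, 1 ≤ k ∧ k ≤ m ∧ 1 ≤ r ∧ r ≤ m ∧ k ≠ r ∧ 3 ≤ ℓ ∧ ℓ ≤ n ∧
          a = (k-1)*(n-1)+ℓ ∧ b = (r-1)*(n-1)+(ℓ-1))) := by
  constructor
  · rintro (⟨ha, k, hk, hb⟩ | ⟨k, i, hk, hi2, hiN, ha, hb⟩ | ⟨k, hk, ha, hb⟩ |
      ⟨k, s, i, hk, hs, hiN, hri, ha, hb⟩)
    · refine Or.inl ⟨k+1, by omega, by omega, ha, ?_⟩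
      simp only [Nat.add_sub_cancel]; omega
    · omega
    · refine Or.inr (Or.inl ⟨k+1, by omega, by omega, ?_, hb⟩)
      simp only [Nat.add_sub_cancel]; omega
    · by_cases hks : k = s
      · subst hks
        refine Or.inr (Or.inr (Or.inl ⟨k+1, i, by omega, by omega, by omega, by omega, ?_, ?_⟩))
        · simp only [Nat.add_sub_cancel]; exact ha
        · omega
      · refine Or.inr (Or.inr (Or.inr ⟨k+1, s+1, i, by omega, by omega, by omega, by omega,
          by omega, by omega, by omega, ?_, ?_⟩))
        · simp only [Nat.add_sub_cancel]; exact ha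
        · simp only [Nat.add_sub_cancel]; omega
  · rintro (⟨k, hk1, hkm, ha, hb⟩ | ⟨k, hk1, hkm, ha, hb⟩ |
      ⟨k, ℓ, hk1, hkm, hl3, hln, ha, hb⟩ |
      ⟨k, s, ℓ, hk1, hkm, hs1, hsm, hks, hl3, hln, ha, hb⟩)
    · exact Or.inl ⟨ha, k-1, by omega, by omega⟩
    · exact Or.inr (Or.inr (Or.inl ⟨k-1, by omega, by omega, hb⟩))
    · exact Or.inr (Or.inr (Or.inr ⟨k-1, k-1, ℓ, by omega, by omega, by omega,
        by omega, ha, by omega⟩))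
    · exact Or.inr (Or.inr (Or.inr ⟨k-1, s-1, ℓ, by omega, by omega, by omega,
        by omega, ha, by omega⟩))


theorem windmillMatrix_pow_n_minus_one_entries (m n : ℕ) (hm : 2 ≤ m) (hn : 3 ≤ n)
    (i j : Fin (m*(n-1)+1)) :
    (((windmillMatrix m n)^(n-1)) i j = 1 ↔
      ((∃ k, 1 ≤ k ∧ k ≤ m ∧ (i:ℕ)+1 = 1 ∧ (j:ℕ)+1 = (k-1)*(n-1)+n) ∨
       (∃ k, 1 ≤ k ∧ k ≤ m ∧ (i:ℕ)+1 = (k-1)*(n-1)+2 ∧ (j:ℕ)+1 = 1) ∨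
       (∃ k ℓ, 1 ≤ k ∧ k ≤ m ∧ 3 ≤ ℓ ∧ ℓ ≤ n ∧
          (i:ℕ)+1 = (k-1)*(n-1)+ℓ ∧ (j:ℕ)+1 = ((i:ℕ)+1) - 1) ∨
       (∃ k r ℓ, 1 ≤ k ∧ k ≤ m ∧ 1 ≤ r ∧ r ≤ m ∧ k ≠ r ∧ 3 ≤ ℓ ∧ ℓ ≤ n ∧
          (i:ℕ)+1 = (k-1)*(n-1)+ℓ ∧ (j:ℕ)+1 = (r-1)*(n-1)+(ℓ-1)))) ∧
    (¬((∃ k, 1 ≤ k ∧ k ≤ m ∧ (i:ℕ)+1 = 1 ∧ (j:ℕ)+1 = (k-1)*(n-1)+n) ∨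
       (∃ k, 1 ≤ k ∧ k ≤ m ∧ (i:ℕ)+1 = (k-1)*(n-1)+2 ∧ (j:ℕ)+1 = 1) ∨
       (∃ k ℓ, 1 ≤ k ∧ k ≤ m ∧ 3 ≤ ℓ ∧ ℓ ≤ n ∧
          (i:ℕ)+1 = (k-1)*(n-1)+ℓ ∧ (j:ℕ)+1 = ((i:ℕ)+1) - 1) ∨
       (∃ k r ℓ, 1 ≤ k ∧ k ≤ m ∧ 1 ≤ r ∧ r ≤ m ∧ k ≠ r ∧ 3 ≤ ℓ ∧ ℓ ≤ n ∧
          (i:ℕ)+1 = (k-1)*(n-1)+ℓ ∧ (j:ℕ)+1 = (r-1)*(n-1)+(ℓ-1))) →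
      ((windmillMatrix m n)^(n-1)) i j = 0) := by
  have hpow := pow_eq_WA hm hn (n-1) (by omega) (le_refl _)
  have hiff := final_iff (m := m) (n := n) (a := (i:ℕ)+1) (b := (j:ℕ)+1) hn
  constructor
  · rw [hpow]
    simp only [WA]
    by_cases h : WP m (n-1) (n-1) ((i:ℕ)+1) ((j:ℕ)+1)
    · rw [if_pos h]
      exact ⟨fun _ => hiff.mp h, fun _ => rfl⟩
    · rw [if_neg h]
      exact ⟨fun h0 => absurd h0 (by norm_num), fun hR => absurd (hiff.mpr hR) h⟩
  · intro hnR
    rw [hpow]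
    simp only [WA]
    rw [if_neg]
    intro h
    exact hnR (hiff.mp h)
end

section
/- Let M be the adjacency matrix of the oriented Dutch windmill graph D^m_n with m ≥ 2 and n ≥ 3. Then M admits no group inverse; that is, there is no matrix X with MXM = M, XMX = X, and MX = XM. -/
lemma windmill_prodcase (k n : ℕ) (hk : 1 ≤ k) :
    k = 1 ∧ (k-1)*(n-1) = 0 ∨ k = 2 ∧ (k-1)*(n-1) = n-1 ∨ (3 ≤ k ∧ 2*(n-1) ≤ (k-1)*(n-1)) := by
  rcases Nat.lt_or_ge k 3 with h | h
  · interval_cases k <;> simp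
  · exact Or.inr (Or.inr ⟨h, Nat.mul_le_mul_right _ (by omega)⟩)

lemma windmill_edge_to_two (m n a : ℕ) (hm : 2 ≤ m) (hn : 3 ≤ n) :
    windmillEdge m n a 2 ↔ a = 1 := by
  constructor
  · rintro (⟨k,hk1,hkm,ha,hb⟩|⟨k,i,hk1,hkm,hi2,hin,ha,hb⟩|⟨k,hk1,hkm,ha,hb⟩) <;>
      rcases windmill_prodcase k n hk1 with ⟨h,h'⟩|⟨h,h'⟩|⟨h,h'⟩ <;> omega
  · rintro rfl; exact Or.inl ⟨1, le_refl _, by omega, rfl, by simp⟩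

lemma windmill_edge_to_three (m n a : ℕ) (hm : 2 ≤ m) (hn : 3 ≤ n) :
    windmillEdge m n a 3 ↔ a = 2 := by
  constructor
  · rintro (⟨k,hk1,hkm,ha,hb⟩|⟨k,i,hk1,hkm,hi2,hin,ha,hb⟩|⟨k,hk1,hkm,ha,hb⟩) <;>
      rcases windmill_prodcase k n hk1 with ⟨h,h'⟩|⟨h,h'⟩|⟨h,h'⟩ <;> omega
  · rintro rfl
    exact Or.inr (Or.inl ⟨1, 2, le_refl _, by omega, le_refl _, by omega, by simp, rfl⟩)

lemma windmill_edge_to_np1 (m n a : ℕ) (hm : 2 ≤ m) (hn : 3 ≤ n) :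
    windmillEdge m n a (n+1) ↔ a = 1 := by
  constructor
  · rintro (⟨k,hk1,hkm,ha,hb⟩|⟨k,i,hk1,hkm,hi2,hin,ha,hb⟩|⟨k,hk1,hkm,ha,hb⟩) <;>
      rcases windmill_prodcase k n hk1 with ⟨h,h'⟩|⟨h,h'⟩|⟨h,h'⟩ <;> omega
  · rintro rfl; exact Or.inl ⟨2, by omega, hm, rfl, by simp; omega⟩

lemma windmill_edge_to_np2 (m n a : ℕ) (hm : 2 ≤ m) (hn : 3 ≤ n) :
    windmillEdge m n a (n+2) ↔ a = n+1 := by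
  constructor
  · rintro (⟨k,hk1,hkm,ha,hb⟩|⟨k,i,hk1,hkm,hi2,hin,ha,hb⟩|⟨k,hk1,hkm,ha,hb⟩) <;>
      rcases windmill_prodcase k n hk1 with ⟨h,h'⟩|⟨h,h'⟩|⟨h,h'⟩ <;> omega
  · rintro rfl
    exact Or.inr (Or.inl ⟨2, 2, by omega, hm, le_refl _, by omega, by simp; omega, by omega⟩)

set_option maxHeartbeats 2000000 in
theorem windmillMatrix_no_group_inverse (m n : ℕ) (hm : 2 ≤ m) (hn : 3 ≤ n) :
    ¬ ∃ X : Matrix (Fin (m*(n-1)+1)) (Fin (m*(n-1)+1)) ℝ,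
      windmillMatrix m n * X * windmillMatrix m n = windmillMatrix m n ∧
      X * windmillMatrix m n * X = X ∧
      windmillMatrix m n * X = X * windmillMatrix m n := by
  rintro ⟨X, h1, _h2, h3⟩
  set N := windmillMatrix m n with hN
  have hlarge : 2*(n-1) ≤ m*(n-1) := Nat.mul_le_mul_right _ hm
  have hsz : n+1 < m*(n-1)+1 := by omega
  set a1 : Fin (m*(n-1)+1) := ⟨1, by omega⟩ with ha1
  set a2 : Fin (m*(n-1)+1) := ⟨2, by omega⟩ with ha2
  set an : Fin (m*(n-1)+1) := ⟨n, by omega⟩ with han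
  set an1 : Fin (m*(n-1)+1) := ⟨n+1, by omega⟩ with han1
  have hMv : N.mulVec (Pi.single a2 1 - Pi.single an1 1) =
      (Pi.single a1 1 - Pi.single an 1 : Fin (m*(n-1)+1) → ℝ) := by
    funext i
    simp only [Matrix.mulVec_sub, Matrix.mulVec_single_one, Matrix.col_apply, Pi.sub_apply, mul_one, hN,
      windmillMatrix]
    rw [show ((a2:ℕ)) + 1 = 3 from rfl, show ((an1:ℕ)) + 1 = n+2 from rfl,
      windmill_edge_to_three m n _ hm hn, windmill_edge_to_np2 m n _ hm hn]
    simp only [Pi.single_apply, ha1, han, Fin.ext_iff]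
    split_ifs <;> (try norm_num) <;> omega
  have hMw : N.mulVec (Pi.single a1 1 - Pi.single an 1) = 0 := by
    funext i
    simp only [Matrix.mulVec_sub, Matrix.mulVec_single_one, Matrix.col_apply, Pi.sub_apply, mul_one, hN,
      windmillMatrix, Pi.zero_apply]
    rw [show ((a1:ℕ)) + 1 = 2 from rfl, show ((an:ℕ)) + 1 = n+1 from rfl,
      windmill_edge_to_two m n _ hm hn, windmill_edge_to_np1 m n _ hm hn]
    split_ifs <;> norm_num
  have key : N = X * (N * N) := by
    calc N = N * X * N := h1.symm
    _ = X * N * N := by rw [h3]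
    _ = X * (N * N) := mul_assoc _ _ _
  have hzero : N.mulVec (Pi.single a2 1 - Pi.single an1 1) = 0 := by
    rw [key, ← Matrix.mulVec_mulVec, ← Matrix.mulVec_mulVec, hMv, hMw, Matrix.mulVec_zero]
  rw [hMv] at hzero
  have heval := congrFun hzero a1
  have hne : a1 ≠ an := by simp only [ha1, han, Ne, Fin.ext_iff]; omega
  simp only [Pi.sub_apply, Pi.single_apply, Pi.zero_apply, if_pos rfl, if_neg hne] at heval
  norm_num at heval
end
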